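/- arXiv:2506.09005 — 7 statements merged into one kernel-verified Lean document; each statement's English description precedes it below -/
import Mathlib

section
/- Let m > 1 be a real number, let 0 < a < b, and let Ω = {x ∈ ℝ² : a < |x| < b}. Every smooth function u : ℝ² → ℝ whose closed support is a compact subset of Ω satisfies the identity ∫_Ω ((𝓛_m u)(x))² dx = ∫_Ω (Δu(x) + (m²−1)·u(x)/|x|²)² dx + 4(m²−1)·∫_Ω ((x·∇u(x))/|x|² − u(x)/|x|²)² dx. -/
/-!
Write `A = Δu + (m² − 1) u / |x|²` and `B = (x·∇u − u) / |x|²`. Then `𝓛_m u = A + 2(m − 1) B`,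
so the identity amounts to the Rellich-type relation `∫ A B = 2 ∫ B²`. That relation holds because
`2 A B − 4 B²` is the divergence of the field
`|x|⁻² (2 (x·∇u − u) ∇u − |∇u|² x + (m² + 1) u² x / |x|²)`, which is `C¹` with compact support
since `u` vanishes near the origin.
-/

open MeasureTheory

noncomputable section

/-- The open annulus `{x ∈ ℝ² : a < |x| < b}`, with `ℝ²` identified with `ℂ`. -/
def ann (a b : ℝ) : Set ℂ := {z : ℂ | a < ‖z‖ ∧ ‖z‖ < b}

/-- First partial derivative `∂₁u` of a function on `ℝ² ≅ ℂ`. -/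
def pd1 (u : ℂ → ℝ) (z : ℂ) : ℝ := fderiv ℝ u z 1

/-- Second partial derivative `∂₂u` of a function on `ℝ² ≅ ℂ`. -/
def pd2 (u : ℂ → ℝ) (z : ℂ) : ℝ := fderiv ℝ u z Complex.I

/-- The Euclidean Laplacian `Δu = ∂₁∂₁u + ∂₂∂₂u`. -/
def lap (u : ℂ → ℝ) (z : ℂ) : ℝ := pd1 (pd1 u) z + pd2 (pd2 u) z

/-- The operator `𝓛_m u = Δu + 2(m−1)(x·∇u)/|x|² + (m−1)²u/|x|²`. -/
def Lop (m : ℝ) (u : ℂ → ℝ) (z : ℂ) : ℝ :=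
  lap u z + 2 * (m - 1) * (z.re * pd1 u z + z.im * pd2 u z) / ‖z‖ ^ 2
    + (m - 1) ^ 2 * u z / ‖z‖ ^ 2


open MeasureTheory Function

section
variable {𝕜 E F : Type*} [NontriviallyNormedField 𝕜] [NormedAddCommGroup E] [NormedSpace 𝕜 E]
  [NormedAddCommGroup F] [NormedSpace 𝕜 F]

theorem contDiff_of_contDiffAt_of_eq_zero {n : WithTop ℕ∞} {f : E → F} {K : Set E}
    (hK : IsClosed K) (hf : ∀ x ∈ K, ContDiffAt 𝕜 n f x) (hf0 : ∀ x ∉ K, f x = 0) :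
    ContDiff 𝕜 n f := by
  refine contDiff_iff_contDiffAt.2 fun x => ?_
  by_cases hx : x ∈ K
  · exact hf x hx
  · exact contDiffAt_const.congr_of_eventuallyEq
      (Filter.mem_of_superset (hK.isOpen_compl.mem_nhds hx) fun y hy => hf0 y hy)

end

section
variable {E F : Type*} [NormedAddCommGroup E] [NormedSpace ℝ E] [MeasurableSpace E]
  [NormedAddCommGroup F] [NormedSpace ℝ F] {μ : Measure E} {g : E → F}

theorem HasCompactSupport.integrable_fderiv_apply [OpensMeasurableSpace E]
    [IsFiniteMeasureOnCompacts μ] (hcs : HasCompactSupport g) (hg : ContDiff ℝ 1 g) (v : E) :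
    Integrable (fun x => fderiv ℝ g x v) μ :=
  ((hg.continuous_fderiv one_ne_zero).clm_apply continuous_const).integrable_of_hasCompactSupport
    (hcs.fderiv_apply (𝕜 := ℝ) v)

theorem HasCompactSupport.integral_fderiv_apply_eq_zero [FiniteDimensional ℝ E] [BorelSpace E]
    [μ.IsAddHaarMeasure] (hcs : HasCompactSupport g) (hg : ContDiff ℝ 1 g) (v : E) :
    ∫ x, fderiv ℝ g x v ∂μ = 0 := by
  have h := integral_smul_fderiv_eq_neg_fderiv_smul_of_integrable (μ := μ) (f := fun _ => (1 : ℝ))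
    (v := v) (by simp) (by simpa using hcs.integrable_fderiv_apply hg v)
    (by simpa using hg.continuous.integrable_of_hasCompactSupport hcs)
    (fun x _ => differentiableAt_const _) (fun x _ => hg.differentiable one_ne_zero x)
  simpa using h

end

theorem integral_pd1_add_pd2_eq_zero {F₁ F₂ : ℂ → ℝ} (h₁ : ContDiff ℝ 1 F₁)
    (hc₁ : HasCompactSupport F₁) (h₂ : ContDiff ℝ 1 F₂) (hc₂ : HasCompactSupport F₂) :
    ∫ z, pd1 F₁ z + pd2 F₂ z = 0 := by
  have h := integral_add (μ := volume) (hc₁.integrable_fderiv_apply h₁ 1)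
    (hc₂.integrable_fderiv_apply h₂ Complex.I)
  rwa [hc₁.integral_fderiv_apply_eq_zero h₁, hc₂.integral_fderiv_apply_eq_zero h₂, add_zero] at h

def lapShift (m : ℝ) (u : ℂ → ℝ) (z : ℂ) : ℝ := lap u z + (m ^ 2 - 1) * u z / ‖z‖ ^ 2

def eulerDefect (u : ℂ → ℝ) (z : ℂ) : ℝ :=
  (z.re * pd1 u z + z.im * pd2 u z) / ‖z‖ ^ 2 - u z / ‖z‖ ^ 2

/-- The component along `e` of the field
`|x|⁻² (2 (x·∇u − u) ∇u − |∇u|² x + (m² + 1) u² x / |x|²)`. -/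
def rellichField (m : ℝ) (u : ℂ → ℝ) (e z : ℂ) : ℝ :=
  (2 * (z.re * pd1 u z + z.im * pd2 u z - u z) * fderiv ℝ u z e
      - (pd1 u z ^ 2 + pd2 u z ^ 2) * inner ℝ e z
      + (m ^ 2 + 1) * u z ^ 2 * inner ℝ e z * (‖z‖ ^ 2)⁻¹) * (‖z‖ ^ 2)⁻¹

theorem Lop_eq_lapShift_add (m : ℝ) (u : ℂ → ℝ) (z : ℂ) :
    Lop m u z = lapShift m u z + 2 * (m - 1) * eulerDefect u z := by
  simp only [Lop, lapShift, eulerDefect]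
  ring

section
variable {u : ℂ → ℝ} {z : ℂ}

theorem hasFDerivAt_fderiv (hu : ContDiff ℝ 2 u) (z : ℂ) :
    HasFDerivAt (fderiv ℝ u) (fderiv ℝ (fderiv ℝ u) z) z :=
  ((hu.fderiv_right (m := 1) le_rfl).differentiable one_ne_zero z).hasFDerivAt

theorem hasFDerivAt_fderiv_apply (hu : ContDiff ℝ 2 u) (e z : ℂ) :
    HasFDerivAt (fun y => fderiv ℝ u y e) ((fderiv ℝ (fderiv ℝ u) z).flip e) z := by
  simpa using (hasFDerivAt_fderiv hu z).clm_apply (hasFDerivAt_const e z)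

theorem contDiff_pd1 {n k : WithTop ℕ∞} (hu : ContDiff ℝ n u) (hk : k + 1 ≤ n) :
    ContDiff ℝ k (pd1 u) :=
  (hu.fderiv_right hk).clm_apply contDiff_const

theorem contDiff_pd2 {n k : WithTop ℕ∞} (hu : ContDiff ℝ n u) (hk : k + 1 ≤ n) :
    ContDiff ℝ k (pd2 u) :=
  (hu.fderiv_right hk).clm_apply contDiff_const

theorem pd1_eq_zero_of_notMem_tsupport (hz : z ∉ tsupport u) : pd1 u z = 0 := by
  simp [pd1, fderiv_of_notMem_tsupport ℝ hz]

theorem pd2_eq_zero_of_notMem_tsupport (hz : z ∉ tsupport u) : pd2 u z = 0 := by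
  simp [pd2, fderiv_of_notMem_tsupport ℝ hz]

theorem lap_eq_zero_of_notMem_tsupport (hz : z ∉ tsupport u) : lap u z = 0 := by
  have h₁ : z ∉ tsupport (pd1 u) := fun h => hz (tsupport_fderiv_apply_subset ℝ 1 h)
  have h₂ : z ∉ tsupport (pd2 u) := fun h => hz (tsupport_fderiv_apply_subset ℝ Complex.I h)
  simp [lap, pd1_eq_zero_of_notMem_tsupport h₁, pd2_eq_zero_of_notMem_tsupport h₂]

theorem lapShift_eq_zero_of_notMem_tsupport (m : ℝ) (hz : z ∉ tsupport u) :
    lapShift m u z = 0 := by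
  simp [lapShift, lap_eq_zero_of_notMem_tsupport hz, image_eq_zero_of_notMem_tsupport hz]

theorem eulerDefect_eq_zero_of_notMem_tsupport (hz : z ∉ tsupport u) : eulerDefect u z = 0 := by
  simp [eulerDefect, pd1_eq_zero_of_notMem_tsupport hz, pd2_eq_zero_of_notMem_tsupport hz,
    image_eq_zero_of_notMem_tsupport hz]

theorem rellichField_eq_zero_of_notMem_tsupport (m : ℝ) (e : ℂ) (hz : z ∉ tsupport u) :
    rellichField m u e z = 0 := by
  simp [rellichField, pd1_eq_zero_of_notMem_tsupport hz, pd2_eq_zero_of_notMem_tsupport hz,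
    image_eq_zero_of_notMem_tsupport hz, fderiv_of_notMem_tsupport ℝ hz]

theorem continuous_lapShift (m : ℝ) (hu : ContDiff ℝ 2 u) (h0 : (0 : ℂ) ∉ tsupport u) :
    Continuous (lapShift m u) := by
  refine (contDiff_of_contDiffAt_of_eq_zero (𝕜 := ℝ) (n := 0) (isClosed_tsupport u)
    (fun z hz => ?_) fun z hz => lapShift_eq_zero_of_notMem_tsupport m hz).continuous
  have hz0 : z ≠ 0 := ne_of_mem_of_not_mem hz h0
  have hN : ContDiffAt ℝ 0 (fun z : ℂ => ‖z‖) z := contDiffAt_norm ℝ hz0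
  have hlap : ContDiffAt ℝ 0 (lap u) z :=
    ((contDiff_pd1 (contDiff_pd1 hu (by norm_num)) le_rfl).add
      (contDiff_pd2 (contDiff_pd2 hu (by norm_num)) le_rfl)).contDiffAt
  have hu0 : ContDiffAt ℝ 0 u z := (hu.of_le (by norm_num)).contDiffAt
  have : ‖z‖ ^ 2 ≠ 0 := by simpa using hz0
  unfold lapShift
  fun_prop (disch := assumption)

theorem continuous_eulerDefect (hu : ContDiff ℝ 1 u) (h0 : (0 : ℂ) ∉ tsupport u) :
    Continuous (eulerDefect u) := by
  refine (contDiff_of_contDiffAt_of_eq_zero (𝕜 := ℝ) (n := 0) (isClosed_tsupport u)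
    (fun z hz => ?_) fun z hz => eulerDefect_eq_zero_of_notMem_tsupport hz).continuous
  have hz0 : z ≠ 0 := ne_of_mem_of_not_mem hz h0
  have hN : ContDiffAt ℝ 0 (fun z : ℂ => ‖z‖) z := contDiffAt_norm ℝ hz0
  have hre : ContDiffAt ℝ 0 (fun z : ℂ => z.re) z := Complex.reCLM.contDiff.contDiffAt
  have him : ContDiffAt ℝ 0 (fun z : ℂ => z.im) z := Complex.imCLM.contDiff.contDiffAt
  have hp : ContDiffAt ℝ 0 (pd1 u) z := (contDiff_pd1 hu le_rfl).contDiffAt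
  have hq : ContDiffAt ℝ 0 (pd2 u) z := (contDiff_pd2 hu le_rfl).contDiffAt
  have hu0 : ContDiffAt ℝ 0 u z := (hu.of_le (by norm_num)).contDiffAt
  have : ‖z‖ ^ 2 ≠ 0 := by simpa using hz0
  unfold eulerDefect
  fun_prop (disch := assumption)

theorem contDiff_rellichField (m : ℝ) (e : ℂ) (hu : ContDiff ℝ 2 u) (h0 : (0 : ℂ) ∉ tsupport u) :
    ContDiff ℝ 1 (rellichField m u e) := by
  refine contDiff_of_contDiffAt_of_eq_zero (isClosed_tsupport u) (fun z hz => ?_)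
    fun z hz => rellichField_eq_zero_of_notMem_tsupport m e hz
  have hz0 : z ≠ 0 := ne_of_mem_of_not_mem hz h0
  have hN : ContDiffAt ℝ 1 (fun z : ℂ => ‖z‖) z := contDiffAt_norm ℝ hz0
  have hre : ContDiffAt ℝ 1 (fun z : ℂ => z.re) z := Complex.reCLM.contDiff.contDiffAt
  have him : ContDiffAt ℝ 1 (fun z : ℂ => z.im) z := Complex.imCLM.contDiff.contDiffAt
  have he : ContDiffAt ℝ 1 (fun y => inner ℝ e y) z := (innerSL ℝ e).contDiff.contDiffAt
  have hp : ContDiffAt ℝ 1 (pd1 u) z := (contDiff_pd1 hu le_rfl).contDiffAt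
  have hq : ContDiffAt ℝ 1 (pd2 u) z := (contDiff_pd2 hu le_rfl).contDiffAt
  have hue : ContDiffAt ℝ 1 (fun y => fderiv ℝ u y e) z :=
    ((hu.fderiv_right le_rfl).clm_apply contDiff_const).contDiffAt
  have hu1 : ContDiffAt ℝ 1 u z := (hu.of_le (by norm_num)).contDiffAt
  have : ‖z‖ ^ 2 ≠ 0 := by simpa using hz0
  unfold rellichField
  fun_prop (disch := assumption)

theorem pd1_add_pd2_rellichField (m : ℝ) (hu : ContDiff ℝ 2 u) (hz : z ≠ 0) :
    pd1 (rellichField m u 1) z + pd2 (rellichField m u Complex.I) z =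
      2 * lapShift m u z * eulerDefect u z - 4 * eulerDefect u z ^ 2 := by
  have hre : HasFDerivAt (fun w : ℂ => w.re) Complex.reCLM z := Complex.reCLM.hasFDerivAt
  have him : HasFDerivAt (fun w : ℂ => w.im) Complex.imCLM z := Complex.imCLM.hasFDerivAt
  have hu' : HasFDerivAt u (fderiv ℝ u z) z := (hu.differentiable two_ne_zero z).hasFDerivAt
  have hp : HasFDerivAt (pd1 u) _ z := hasFDerivAt_fderiv_apply hu 1 z
  have hq : HasFDerivAt (pd2 u) _ z := hasFDerivAt_fderiv_apply hu Complex.I z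
  have hρ := (hasDerivAt_inv (by simpa using hz)).comp_hasFDerivAt z
    (hasStrictFDerivAt_norm_sq z).hasFDerivAt
  have hW := (((hre.mul hp).add (him.mul hq)).sub hu').const_mul 2
  have hG : ∀ e : ℂ, HasFDerivAt (rellichField m u e) _ z := fun e =>
    (((hW.mul (hasFDerivAt_fderiv_apply hu e z)).sub
      (((hp.pow 2).add (hq.pow 2)).mul (innerSL ℝ e).hasFDerivAt)).add
      ((((hu'.pow 2).const_mul (m ^ 2 + 1)).mul (innerSL ℝ e).hasFDerivAt).mul hρ)).mul hρ
  have hsym : fderiv ℝ (fderiv ℝ u) z Complex.I 1 = fderiv ℝ (fderiv ℝ u) z 1 Complex.I :=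
    second_derivative_symmetric (fun y => (hu.differentiable two_ne_zero y).hasFDerivAt)
      (hasFDerivAt_fderiv hu z) _ _
  have hR : ‖z‖ ^ 2 = z.re ^ 2 + z.im ^ 2 := by rw [Complex.sq_norm, Complex.normSq_apply]; ring
  have hR0 : z.re ^ 2 + z.im ^ 2 ≠ 0 := by rw [← hR]; positivity
  rw [pd1, pd2, (hG 1).fderiv, (hG Complex.I).fderiv, lapShift, lap, eulerDefect, pd1, pd1, pd2,
    pd2, hp.fderiv, hq.fderiv]
  simp only [pd1, pd2, hR, hsym, Pi.add_apply, Pi.sub_apply, Pi.mul_apply, comp_apply, add_apply,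
    sub_apply, smul_apply, smul_eq_mul, nsmul_eq_mul, ContinuousLinearMap.flip_apply,
    Complex.reCLM_apply, Complex.imCLM_apply, coe_innerSL_apply, Complex.inner, Complex.conj_re,
    Complex.conj_im, Complex.mul_re, Complex.one_re, Complex.one_im, Complex.I_re, Complex.I_im]
  field_simp
  ring

theorem integral_lapShift_mul_eulerDefect (m : ℝ) (hu : ContDiff ℝ 2 u)
    (hcs : HasCompactSupport u) (h0 : (0 : ℂ) ∉ tsupport u) :
    ∫ z, lapShift m u z * eulerDefect u z = 2 * ∫ z, eulerDefect u z ^ 2 := by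
  have hdiv : ∀ z, 2 * lapShift m u z * eulerDefect u z - 4 * eulerDefect u z ^ 2 =
      pd1 (rellichField m u 1) z + pd2 (rellichField m u Complex.I) z := by
    intro z
    by_cases hz : z ∈ tsupport u
    · exact (pd1_add_pd2_rellichField m hu (ne_of_mem_of_not_mem hz h0)).symm
    · have hG : ∀ e, z ∉ tsupport (rellichField m u e) := fun e h =>
        hz (closure_minimal (support_subset_iff'.2 fun _ hw =>
          rellichField_eq_zero_of_notMem_tsupport m e hw) (isClosed_tsupport u) h)
      simp [eulerDefect_eq_zero_of_notMem_tsupport hz, pd1_eq_zero_of_notMem_tsupport (hG 1),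
        pd2_eq_zero_of_notMem_tsupport (hG Complex.I)]
  have hcsG : ∀ e, HasCompactSupport (rellichField m u e) := fun e =>
    HasCompactSupport.intro hcs fun z hz => rellichField_eq_zero_of_notMem_tsupport m e hz
  have hA := continuous_lapShift m hu h0
  have hB := continuous_eulerDefect (hu.of_le (by norm_num)) h0
  have hint : ∀ f : ℂ → ℝ, Continuous f → (∀ z ∉ tsupport u, f z = 0) → Integrable f :=
    fun f hf hf0 => hf.integrable_of_hasCompactSupport (HasCompactSupport.intro hcs hf0)
  have hAB := hint (fun z => 2 * lapShift m u z * eulerDefect u z) (by fun_prop)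
    fun z hz => by simp [eulerDefect_eq_zero_of_notMem_tsupport hz]
  have hBB := hint (fun z => 4 * eulerDefect u z ^ 2) (by fun_prop)
    fun z hz => by simp [eulerDefect_eq_zero_of_notMem_tsupport hz]
  have h := integral_sub hAB hBB
  simp_rw [hdiv, integral_pd1_add_pd2_eq_zero (contDiff_rellichField m 1 hu h0) (hcsG 1)
    (contDiff_rellichField m Complex.I hu h0) (hcsG Complex.I), mul_assoc,
    integral_const_mul] at h
  linarith

theorem setIntegral_Lop_sq (m : ℝ) (hu : ContDiff ℝ 2 u) (hcs : HasCompactSupport u)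
    (h0 : (0 : ℂ) ∉ tsupport u) {s : Set ℂ} (hs : tsupport u ⊆ s) :
    ∫ z in s, Lop m u z ^ 2 =
      (∫ z in s, lapShift m u z ^ 2) + 4 * (m ^ 2 - 1) * ∫ z in s, eulerDefect u z ^ 2 := by
  have hB0 : ∀ z ∉ s, eulerDefect u z = 0 := fun z hz =>
    eulerDefect_eq_zero_of_notMem_tsupport fun h => hz (hs h)
  have hAB0 : ∀ z ∉ s, lapShift m u z * eulerDefect u z = 0 := fun z hz => by simp [hB0 z hz]
  have hBB0 : ∀ z ∉ s, eulerDefect u z ^ 2 = 0 := fun z hz => by simp [hB0 z hz]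
  have key : ∫ z in s, lapShift m u z * eulerDefect u z = 2 * ∫ z in s, eulerDefect u z ^ 2 := by
    rw [setIntegral_eq_integral_of_forall_compl_eq_zero hAB0,
      setIntegral_eq_integral_of_forall_compl_eq_zero hBB0]
    exact integral_lapShift_mul_eulerDefect m hu hcs h0
  have hA := continuous_lapShift m hu h0
  have hB := continuous_eulerDefect (hu.of_le (by norm_num)) h0
  have hint : ∀ f : ℂ → ℝ, Continuous f → (∀ z ∉ tsupport u, f z = 0) → IntegrableOn f s :=
    fun f hf hf0 =>
      (hf.integrable_of_hasCompactSupport (HasCompactSupport.intro hcs hf0)).integrableOn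
  have hAA := hint (fun z => lapShift m u z ^ 2) (by fun_prop)
    fun z hz => by simp [lapShift_eq_zero_of_notMem_tsupport m hz]
  have hAB := hint (fun z => lapShift m u z * eulerDefect u z) (by fun_prop)
    fun z hz => by simp [eulerDefect_eq_zero_of_notMem_tsupport hz]
  have hBB := hint (fun z => eulerDefect u z ^ 2) (by fun_prop)
    fun z hz => by simp [eulerDefect_eq_zero_of_notMem_tsupport hz]
  have hAA_AB : IntegrableOn
      (fun z => lapShift m u z ^ 2 + 4 * (m - 1) * (lapShift m u z * eulerDefect u z)) s :=
    hAA.add (hAB.const_mul _)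
  calc ∫ z in s, Lop m u z ^ 2
      = ∫ z in s, (lapShift m u z ^ 2 + 4 * (m - 1) * (lapShift m u z * eulerDefect u z)
          + 4 * (m - 1) ^ 2 * eulerDefect u z ^ 2) := by
        congr with z
        rw [Lop_eq_lapShift_add]
        ring
    _ = (∫ z in s, lapShift m u z ^ 2)
          + 4 * (m - 1) * (∫ z in s, lapShift m u z * eulerDefect u z)
          + 4 * (m - 1) ^ 2 * ∫ z in s, eulerDefect u z ^ 2 := by
        rw [integral_add hAA_AB (hBB.const_mul _), integral_add hAA (hAB.const_mul _),
          integral_const_mul, integral_const_mul]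
    _ = (∫ z in s, lapShift m u z ^ 2) + 4 * (m ^ 2 - 1) * ∫ z in s, eulerDefect u z ^ 2 := by
        rw [key]
        ring

end

theorem statement1_general (m : ℝ) (a b : ℝ) (ha : 0 < a)
    (u : ℂ → ℝ) (hu : ContDiff ℝ (⊤ : ℕ∞) u) (hcs : IsCompact (tsupport u))
    (hsupp : tsupport u ⊆ ann a b) :
    (∫ z in ann a b, Lop m u z ^ 2) =
      (∫ z in ann a b, (lap u z + (m ^ 2 - 1) * u z / ‖z‖ ^ 2) ^ 2) +
        4 * (m ^ 2 - 1) *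
          (∫ z in ann a b,
            ((z.re * pd1 u z + z.im * pd2 u z) / ‖z‖ ^ 2
              - u z / ‖z‖ ^ 2) ^ 2) := by
  have h0 : (0 : ℂ) ∉ tsupport u := fun h => by simpa [ann, ha.not_gt] using hsupp h
  exact setIntegral_Lop_sq m (hu.of_le (WithTop.coe_le_coe.2 le_top)) hcs h0 hsupp

/-- The identity `∫ (𝓛_m u)² = ∫ (Δu + (m²−1)u/|x|²)²
+ 4(m²−1) ∫ ((x·∇u)/|x|² − u/|x|²)²` for compactly supported smooth `u` on the annulus. -/
theorem statement1 (m : ℝ) (hm : 1 < m) (a b : ℝ) (ha : 0 < a) (hab : a < b)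
    (u : ℂ → ℝ) (hu : ContDiff ℝ (⊤ : ℕ∞) u) (hcs : IsCompact (tsupport u))
    (hsupp : tsupport u ⊆ ann a b) :
    (∫ z in ann a b, Lop m u z ^ 2) =
      (∫ z in ann a b, (lap u z + (m ^ 2 - 1) * u z / ‖z‖ ^ 2) ^ 2) +
        4 * (m ^ 2 - 1) *
          (∫ z in ann a b,
            ((z.re * pd1 u z + z.im * pd2 u z) / ‖z‖ ^ 2
              - u z / ‖z‖ ^ 2) ^ 2) :=
  statement1_general m a b ha u hu hcs hsupp

end
end

section
/- Let α ≠ 2 be a real number, let 0 < a < b, and let Ω = {x ∈ ℝ² : a < |x| < b}. Every smooth function u : ℝ² → ℝ whose closed support is a compact subset of Ω satisfies ∫_Ω (u(x)²/|x|⁴)·|x|^α dx ≤ (4/(α−2)²)·∫_Ω ((x·∇u(x))/|x|²)²·|x|^α dx. -/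
open MeasureTheory

noncomputable section

/-! The inequality is a weighted Hardy inequality in the radial direction. Put `w = |x|^p` with
`p = α - 4`. Since `u` vanishes near `0`, the function `u² w` is smooth with compact support, and the
divergence identity `∫ ∇f · x = -n ∫ f` (integration by parts in each coordinate, `n = 2`) together
with Euler's relation `∇w · x = p w` gives `∫ 2u (x·∇u) w = -(n + p) ∫ u² w = -(α - 2) ∫ u² w`.
Expanding `0 ≤ ∫ (t x·∇u + u)² w` at `t = 2 / (α - 2)` then yields
`∫ u² w ≤ 4 / (α - 2)² ∫ (x·∇u)² w`, which is the claim after writing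
`u² / |x|⁴ · |x|^α = u² w` and `((x·∇u) / |x|²)² |x|^α = (x·∇u)² w`. -/

open Filter Topology Module

section NormedSpace

variable {E : Type*} [NormedAddCommGroup E] [NormedSpace ℝ E]

theorem HasCompactSupport.fderiv_apply_self {g : E → ℝ} (hcs : HasCompactSupport g) :
    HasCompactSupport fun x => fderiv ℝ g x x :=
  (hcs.fderiv (𝕜 := ℝ)).mono fun x hx h => hx (by simp [h])

theorem Filter.EventuallyEq.fderiv_apply_self {g : E → ℝ} {x₀ : E} (h0 : g =ᶠ[𝓝 x₀] 0) :
    (fun x => fderiv ℝ g x x) =ᶠ[𝓝 x₀] 0 := by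
  filter_upwards [h0.fderiv (𝕜 := ℝ)] with x hx
  simp [hx]

variable [FiniteDimensional ℝ E] [MeasurableSpace E] [BorelSpace E]
  (μ : Measure E) [μ.IsAddHaarMeasure]

theorem integral_fderiv_apply_self {f : E → ℝ} (hf : ContDiff ℝ 1 f)
    (hcs : HasCompactSupport f) :
    ∫ x, fderiv ℝ f x x ∂μ = -(finrank ℝ E) * ∫ x, f x ∂μ := by
  let b := finBasis ℝ E
  let c : Fin (finrank ℝ E) → E →L[ℝ] ℝ := fun i =>
    (ContinuousLinearMap.proj i).comp b.equivFunL.toContinuousLinearMap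
  have hexp : ∀ x, fderiv ℝ f x x = ∑ i, fderiv ℝ f x (b i) * c i x := fun x =>
    calc fderiv ℝ f x x = fderiv ℝ f x (∑ i, b.repr x i • b i) := by rw [b.sum_repr]
      _ = _ := by
        rw [map_sum]
        congr 1 with i
        simp [c, mul_comm]
  have hint : ∀ i, Integrable (fun x => fderiv ℝ f x (b i) * c i x) μ := fun i =>
    (((hf.continuous_fderiv one_ne_zero).clm_apply continuous_const).mul
      (c i).continuous).integrable_of_hasCompactSupport (hcs.fderiv_apply (𝕜 := ℝ) _).mul_right
  -- integration by parts against the `i`-th coordinate `c i`, whose derivative along `b i` is `1`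
  have hibp : ∀ i, ∫ x, fderiv ℝ f x (b i) * c i x ∂μ = -∫ x, f x ∂μ := by
    intro i
    have h := integral_mul_fderiv_eq_neg_fderiv_mul_of_integrable (v := b i) (hint i)
      (by simpa [c] using hf.continuous.integrable_of_hasCompactSupport hcs)
      ((hf.continuous.mul (c i).continuous).integrable_of_hasCompactSupport hcs.mul_right)
      (fun x _ => hf.differentiable one_ne_zero x) (fun x _ => (c i).differentiableAt)
    simp only [ContinuousLinearMap.fderiv] at h
    simp [c] at h ⊢
    linarith
  simp_rw [hexp]
  rw [integral_finsetSum _ fun i _ => hint i]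
  simp [hibp]

end NormedSpace

section InnerProductSpace

variable {E : Type*} [NormedAddCommGroup E] [InnerProductSpace ℝ E]

theorem fderiv_norm_rpow_apply_self {x : E} (hx : x ≠ 0) (p : ℝ) :
    fderiv ℝ (fun y : E => ‖y‖ ^ p) x x = p * ‖x‖ ^ p := by
  have hn : DifferentiableAt ℝ (‖·‖) x := (contDiffAt_norm ℝ hx).differentiableAt one_ne_zero
  have hx' : ‖x‖ ≠ 0 := norm_ne_zero_iff.2 hx
  rw [(hn.hasFDerivAt.rpow_const (Or.inl hx')).fderiv, smul_apply,
    hn.fderiv_norm_self, smul_eq_mul, Real.rpow_sub_one hx']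
  field_simp

theorem ContDiff.mul_norm_rpow {n : WithTop ℕ∞} {g : E → ℝ} (hg : ContDiff ℝ n g)
    (h0 : g =ᶠ[𝓝 0] 0) (p : ℝ) : ContDiff ℝ n (fun x => g x * ‖x‖ ^ p) := by
  refine contDiff_iff_contDiffAt.2 fun x => ?_
  rcases eq_or_ne x 0 with rfl | hx
  · refine contDiffAt_const (c := (0 : ℝ)).congr_of_eventuallyEq ?_
    filter_upwards [h0] with y hy
    simp [hy]
  · exact hg.contDiffAt.mul ((contDiffAt_norm ℝ hx).rpow_const_of_ne (norm_ne_zero_iff.2 hx))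

theorem fderiv_mul_norm_rpow_apply_self {g : E → ℝ} {x : E} (hg : DifferentiableAt ℝ g x)
    (h0 : g =ᶠ[𝓝 0] 0) (p : ℝ) :
    fderiv ℝ (fun y => g y * ‖y‖ ^ p) x x = (fderiv ℝ g x x + p * g x) * ‖x‖ ^ p := by
  rcases eq_or_ne x 0 with rfl | hx
  · simp [h0.self_of_nhds]
  · have hw : DifferentiableAt ℝ (fun y : E => ‖y‖ ^ p) x :=
      ((contDiffAt_norm ℝ hx).rpow_const_of_ne (norm_ne_zero_iff.2 hx)).differentiableAt
        one_ne_zero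
    rw [fderiv_fun_mul hg hw]
    simp [fderiv_norm_rpow_apply_self hx]
    ring

variable [MeasurableSpace E] [BorelSpace E]

theorem integrable_mul_norm_rpow (μ : Measure E) [IsFiniteMeasureOnCompacts μ] {g : E → ℝ}
    (hg : Continuous g) (hcs : HasCompactSupport g) (h0 : g =ᶠ[𝓝 0] 0) (p : ℝ) :
    Integrable (fun x => g x * ‖x‖ ^ p) μ :=
  ((contDiff_zero.2 hg).mul_norm_rpow h0 p).continuous.integrable_of_hasCompactSupport
    hcs.mul_right

variable [FiniteDimensional ℝ E] (μ : Measure E) [μ.IsAddHaarMeasure]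

theorem integral_fderiv_apply_self_mul_norm_rpow {g : E → ℝ} (hg : ContDiff ℝ 1 g)
    (hcs : HasCompactSupport g) (h0 : g =ᶠ[𝓝 0] 0) (p : ℝ) :
    ∫ x, fderiv ℝ g x x * ‖x‖ ^ p ∂μ = -(finrank ℝ E + p) * ∫ x, g x * ‖x‖ ^ p ∂μ := by
  have hgw := integrable_mul_norm_rpow μ hg.continuous hcs h0 p
  have hDgw := integrable_mul_norm_rpow μ
    ((hg.continuous_fderiv one_ne_zero).clm_apply continuous_id') hcs.fderiv_apply_self
    h0.fderiv_apply_self p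
  have h := integral_fderiv_apply_self μ (hg.mul_norm_rpow h0 p) hcs.mul_right
  simp_rw [fderiv_mul_norm_rpow_apply_self (hg.differentiable one_ne_zero _) h0, add_mul,
    mul_assoc] at h
  rw [integral_add hDgw (hgw.const_mul p), integral_const_mul] at h
  linarith

theorem integral_sq_mul_norm_rpow_le {u : E → ℝ} (hu : ContDiff ℝ 1 u)
    (hcs : HasCompactSupport u) (h0 : u =ᶠ[𝓝 0] 0) {p : ℝ} (hp : (finrank ℝ E : ℝ) + p ≠ 0) :
    ∫ x, u x ^ 2 * ‖x‖ ^ p ∂μ ≤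
      4 / (finrank ℝ E + p) ^ 2 * ∫ x, fderiv ℝ u x x ^ 2 * ‖x‖ ^ p ∂μ := by
  set s : ℝ := finrank ℝ E + p
  set Du : E → ℝ := fun x => fderiv ℝ u x x
  have hDu : Continuous Du := (hu.continuous_fderiv one_ne_zero).clm_apply continuous_id
  have hDucs : HasCompactSupport Du := hcs.fderiv_apply_self
  have hDu0 : Du =ᶠ[𝓝 0] 0 := h0.fderiv_apply_self
  have hsq : HasCompactSupport fun x => u x ^ 2 := hcs.mono fun x hx h => hx (by simp [h])
  have hsq0 : (fun x => u x ^ 2) =ᶠ[𝓝 0] 0 := h0.mono fun x hx => by simp [hx]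
  have hA : Integrable (fun x => u x ^ 2 * ‖x‖ ^ p) μ :=
    integrable_mul_norm_rpow μ (hu.continuous.pow 2) hsq hsq0 p
  have hB : Integrable (fun x => Du x ^ 2 * ‖x‖ ^ p) μ :=
    integrable_mul_norm_rpow μ (hDu.pow 2)
      (hDucs.mono fun x hx h => hx (by simp [h]))
      (hDu0.mono fun x hx => by simp [hx]) p
  have hC : Integrable (fun x => 2 * u x * Du x * ‖x‖ ^ p) μ :=
    integrable_mul_norm_rpow μ ((continuous_const.mul hu.continuous).mul hDu)
      (hcs.mono fun x hx h => hx (by simp [h])) (h0.mono fun x hx => by simp [hx]) p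
  set A := ∫ x, u x ^ 2 * ‖x‖ ^ p ∂μ
  set B := ∫ x, Du x ^ 2 * ‖x‖ ^ p ∂μ
  have hcross : ∫ x, 2 * u x * Du x * ‖x‖ ^ p ∂μ = -s * A := by
    rw [← integral_fderiv_apply_self_mul_norm_rpow μ (hu.pow 2) hsq hsq0 p]
    congr with x
    rw [fderiv_fun_pow 2 (hu.differentiable one_ne_zero x)]
    simp only [Du, smul_apply, smul_eq_mul, nsmul_eq_mul]
    ring
  -- complete the square: `0 ≤ ∫ (t Du + u)² |x|^p = t² B - t s A + A`, optimal at `t = 2 / s`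
  set t : ℝ := 2 / s
  have hexpand : ∫ x, (t * Du x + u x) ^ 2 * ‖x‖ ^ p ∂μ
      = t ^ 2 * B + t * ∫ x, 2 * u x * Du x * ‖x‖ ^ p ∂μ + A := by
    rw [← integral_const_mul, ← integral_const_mul,
      ← integral_add (hB.const_mul _) (hC.const_mul _), ← integral_add _ hA]
    · congr with x
      ring
    · exact (hB.const_mul _).add (hC.const_mul _)
  have hnonneg : 0 ≤ ∫ x, (t * Du x + u x) ^ 2 * ‖x‖ ^ p ∂μ :=
    integral_nonneg fun x => mul_nonneg (sq_nonneg _) (Real.rpow_nonneg (norm_nonneg x) p)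
  have hts : t * s = 2 := div_mul_cancel₀ 2 hp
  have ht2 : 4 / s ^ 2 = t ^ 2 := by rw [div_pow]; norm_num
  rw [hexpand, hcross, ← mul_assoc, mul_neg, hts] at hnonneg
  show A ≤ 4 / s ^ 2 * B
  rw [ht2]
  linarith

end InnerProductSpace

theorem re_mul_pd1_add_im_mul_pd2 (u : ℂ → ℝ) (z : ℂ) :
    z.re * pd1 u z + z.im * pd2 u z = fderiv ℝ u z z := by
  calc z.re * pd1 u z + z.im * pd2 u z = fderiv ℝ u z (z.re • 1 + z.im • Complex.I) := by
        rw [map_add, map_smul, map_smul, smul_eq_mul, smul_eq_mul, pd1, pd2]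
    _ = fderiv ℝ u z z := by
        congr 1
        apply Complex.ext <;> simp

theorem sq_div_norm_pow_four_mul_rpow {E : Type*} [NormedAddCommGroup E] {z : E} {c : ℝ}
    (hc : z = 0 → c = 0) (α : ℝ) : c ^ 2 / ‖z‖ ^ 4 * ‖z‖ ^ α = c ^ 2 * ‖z‖ ^ (α - 4) := by
  rcases eq_or_ne z 0 with rfl | hz
  · simp [hc rfl]
  · rw [show α - 4 = α - ((4 : ℕ) : ℝ) by norm_num,
      Real.rpow_sub_natCast (norm_ne_zero_iff.2 hz)]
    ring

theorem statement3_general (α : ℝ) (hα : α ≠ 2) (a b : ℝ) (ha : 0 < a)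
    (u : ℂ → ℝ) (hu : ContDiff ℝ (⊤ : ℕ∞) u) (hcs : IsCompact (tsupport u))
    (hsupp : tsupport u ⊆ ann a b) :
    (∫ z in ann a b, u z ^ 2 / ‖z‖ ^ 4 * ‖z‖ ^ α) ≤
      4 / (α - 2) ^ 2 *
        (∫ z in ann a b,
          ((z.re * pd1 u z + z.im * pd2 u z) / ‖z‖ ^ 2) ^ 2 *
            ‖z‖ ^ α) := by
  have h0 : u =ᶠ[𝓝 0] 0 := notMem_tsupport_iff_eventuallyEq.1 fun h => by
    simpa using ha.trans (hsupp h).1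
  have hvanish : ∀ z ∉ ann a b, u z = 0 ∧ fderiv ℝ u z = 0 := fun z hz =>
    ⟨image_eq_zero_of_notMem_tsupport fun h => hz (hsupp h),
      fderiv_of_notMem_tsupport ℝ fun h => hz (hsupp h)⟩
  simp_rw [re_mul_pd1_add_im_mul_pd2]
  rw [setIntegral_eq_integral_of_forall_compl_eq_zero fun z hz => by simp [(hvanish z hz).1],
    setIntegral_eq_integral_of_forall_compl_eq_zero fun z hz => by simp [(hvanish z hz).2]]
  have hp : ((finrank ℝ ℂ : ℕ) : ℝ) + (α - 4) = α - 2 := by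
    rw [Complex.finrank_real_complex]; ring
  calc ∫ z, u z ^ 2 / ‖z‖ ^ 4 * ‖z‖ ^ α
      = ∫ z, u z ^ 2 * ‖z‖ ^ (α - 4) := by
        congr with z
        exact sq_div_norm_pow_four_mul_rpow (fun hz => by subst hz; exact h0.self_of_nhds) α
    _ ≤ 4 / (α - 2) ^ 2 * ∫ z, fderiv ℝ u z z ^ 2 * ‖z‖ ^ (α - 4) := by
        rw [← hp]
        exact integral_sq_mul_norm_rpow_le volume (hu.of_le (by norm_cast)) hcs h0
          (hp ▸ sub_ne_zero.2 hα)
    _ = _ := by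
        congr with z
        rw [div_pow, ← pow_mul]
        exact (sq_div_norm_pow_four_mul_rpow (fun hz => by simp [hz]) α).symm

/-- Weighted Hardy-type inequality
`∫ u²/|x|⁴ |x|^α ≤ (4/(α−2)²) ∫ ((x·∇u)/|x|²)² |x|^α` on the annulus, for `α ≠ 2`. -/
theorem statement3 (α : ℝ) (hα : α ≠ 2) (a b : ℝ) (ha : 0 < a) (hab : a < b)
    (u : ℂ → ℝ) (hu : ContDiff ℝ (⊤ : ℕ∞) u) (hcs : IsCompact (tsupport u))
    (hsupp : tsupport u ⊆ ann a b) :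
    (∫ z in ann a b, u z ^ 2 / ‖z‖ ^ 4 * ‖z‖ ^ α) ≤
      4 / (α - 2) ^ 2 *
        (∫ z in ann a b,
          ((z.re * pd1 u z + z.im * pd2 u z) / ‖z‖ ^ 2) ^ 2 *
            ‖z‖ ^ α) :=
  statement3_general α hα a b ha u hu hcs hsupp
end
end

section
/- Let 0 < a < b ≤ e^{-1} and let γ > 0. Define f₁(r) = r^{γ−1/2}·log r and f₂(r) = r^{γ−1/2} for r > 0, and set D = (1 − (a/b)^{2γ})² − 4γ²·(a/b)^{2γ}·(log(b/a))². Then D > 0, and for every λ > 0 one has λ·b^{2γ}/log(1/b) ≤ (8γ²(1+γ)/D)·∫_a^b (f₁(r) + λ·f₂(r))² dr. -/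
/-!
`r ^ (2γ) (2 (γ (log r + l))² - 2γ (log r + l) + 1)` is a primitive of `4γ³ (f₁ + l f₂)²`,
so `4γ³ b^{-2γ} ∫_a^b (f₁ + l f₂)²` is a quadratic `A + 2γ l B + 2γ² l² C` in `l` whose
reduced discriminant `2AC - B²` is exactly `D`. Positivity of `D` is `|t| < |sinh t|` at
`t = γ log (a/b)`. The claimed inequality says that `K (A + 2γ l B + 2γ² l² C) - γ D l ≥ 0`
with `K = 2(1+γ) log(1/b) ≥ 2`; its discriminant is `γ² D (D - 4K(K + B))`, which is `≤ 0`
because `D ≤ 1` and `K + B ≥ 2 log(1/b) - 1 ≥ 1`.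
-/

open Real

theorem quadratic_nonneg_of_discrim_nonpos {a b c : ℝ} (ha : 0 < a) (h : discrim a b c ≤ 0)
    (x : ℝ) : 0 ≤ a * (x * x) + b * x + c := by
  have hsq : 4 * a * (a * (x * x) + b * x + c) = (2 * a * x + b) ^ 2 - discrim a b c := by
    rw [discrim]; ring
  nlinarith [sq_nonneg (2 * a * x + b)]

theorem four_mul_sq_mul_log_sq_lt_one_sub_sq {y : ℝ} (hy : 0 < y) (hy1 : y ≠ 1) :
    4 * y ^ 2 * log y ^ 2 < (1 - y ^ 2) ^ 2 := by
  have ht : log y ≠ 0 := log_ne_zero_of_pos_of_ne_one hy hy1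
  have hsinh : (1 - y ^ 2) ^ 2 = 4 * y ^ 2 * sinh (log y) ^ 2 := by
    rw [sinh_eq, exp_neg, exp_log hy]
    field_simp
    ring
  have habs : |log y| < |sinh (log y)| := by
    rw [abs_sinh]; exact self_lt_sinh_iff.mpr (abs_pos.mpr ht)
  rw [hsinh]
  exact mul_lt_mul_of_pos_left (sq_lt_sq.mpr habs) (by positivity)

theorem four_mul_sq_mul_rpow_mul_log_sq_lt {x : ℝ} (hx : 0 < x) (hx1 : x ≠ 1) {γ : ℝ}
    (hγ : γ ≠ 0) : 4 * γ ^ 2 * x ^ (2 * γ) * log x ^ 2 < (1 - x ^ (2 * γ)) ^ 2 := by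
  have hlog : log (x ^ γ) = γ * log x := log_rpow hx γ
  have hy1 : x ^ γ ≠ 1 := fun h => by
    simp [h, hγ, log_ne_zero_of_pos_of_ne_one hx hx1] at hlog
  have hsq : x ^ (2 * γ) = (x ^ γ) ^ 2 := by
    rw [← rpow_natCast, ← rpow_mul hx.le]; ring_nf
  have := four_mul_sq_mul_log_sq_lt_one_sub_sq (rpow_pos_of_pos hx γ) hy1
  rw [hlog] at this
  rw [hsq]
  linear_combination this

theorem hasDerivAt_rpow_mul_quadratic_log (γ l : ℝ) {r : ℝ} (hr : 0 < r) :
    HasDerivAt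
      (fun r => r ^ (2 * γ) * (2 * (γ * (log r + l)) ^ 2 - 2 * (γ * (log r + l)) + 1))
      (4 * γ ^ 3 * (r ^ (2 * γ - 1) * (log r + l) ^ 2)) r := by
  have hlog : HasDerivAt (fun r => γ * (log r + l)) (γ * r⁻¹) r :=
    ((hasDerivAt_log hr.ne').add_const l).const_mul γ
  have hquad : HasDerivAt (fun r => 2 * (γ * (log r + l)) ^ 2 - 2 * (γ * (log r + l)) + 1) _ r :=
    ((hlog.pow 2).const_mul 2 |>.sub (hlog.const_mul 2)).add_const 1
  refine ((hasDerivAt_rpow_const (p := 2 * γ) (Or.inl hr.ne')).mul hquad).congr_deriv ?_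
  have hpow : r ^ (2 * γ) = r ^ (2 * γ - 1) * r := by
    rw [← rpow_add_one hr.ne']; ring_nf
  rw [hpow]
  field_simp
  ring

theorem rpow_sub_half_mul_log_add_sq {r : ℝ} (hr : 0 < r) (γ l : ℝ) :
    (r ^ (γ - 1 / 2) * log r + l * r ^ (γ - 1 / 2)) ^ 2 = r ^ (2 * γ - 1) * (log r + l) ^ 2 := by
  rw [show 2 * γ - 1 = (γ - 1 / 2) + (γ - 1 / 2) by ring, rpow_add hr]
  ring

theorem integral_rpow_sub_half_mul_log_add_sq {a b : ℝ} (ha : 0 < a) (hb : 0 < b) (γ l : ℝ) :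
    4 * γ ^ 3 * ∫ r in a..b, (r ^ (γ - 1 / 2) * log r + l * r ^ (γ - 1 / 2)) ^ 2 =
      b ^ (2 * γ) * (2 * (γ * (log b + l)) ^ 2 - 2 * (γ * (log b + l)) + 1) -
        a ^ (2 * γ) * (2 * (γ * (log a + l)) ^ 2 - 2 * (γ * (log a + l)) + 1) := by
  have hpos : ∀ r ∈ Set.uIcc a b, 0 < r := fun r hr => (lt_min ha hb).trans_le hr.1
  rw [intervalIntegral.integral_congr fun r hr => rpow_sub_half_mul_log_add_sq (hpos r hr) γ l,
    ← intervalIntegral.integral_const_mul]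
  refine intervalIntegral.integral_eq_sub_of_hasDerivAt
    (fun r hr => hasDerivAt_rpow_mul_quadratic_log γ l (hpos r hr)) ?_
  refine ContinuousOn.intervalIntegrable fun r hr => ContinuousAt.continuousWithinAt ?_
  have hr := (hpos r hr).ne'
  exact continuousAt_const.mul <| (continuousAt_rpow_const r _ (Or.inl hr)).mul
    (((continuousAt_log hr).add continuousAt_const).pow 2)

/-- With `x = (a/b)^{2γ}`, `L = log b`, `M = log a`, the bracket on the right is
`4γ³ b^{-2γ} ∫_a^b (f₁ + l f₂)²`. -/
theorem mul_discriminant_le_quadratic {x L M γ : ℝ} (hx : 0 ≤ x) (hx1 : x < 1) (hML : M < L)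
    (hL : L ≤ -1) (hγ : 0 < γ) (hD : 0 < (1 - x) ^ 2 - 4 * γ ^ 2 * x * (L - M) ^ 2) (l : ℝ) :
    l * γ * ((1 - x) ^ 2 - 4 * γ ^ 2 * x * (L - M) ^ 2) ≤
      2 * (1 + γ) * -L *
        ((2 * (γ * (L + l)) ^ 2 - 2 * (γ * (L + l)) + 1) -
          x * (2 * (γ * (M + l)) ^ 2 - 2 * (γ * (M + l)) + 1)) := by
  set D := (1 - x) ^ 2 - 4 * γ ^ 2 * x * (L - M) ^ 2 with hD_def
  set K := 2 * (1 + γ) * -L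
  set A := (2 * (γ * L) ^ 2 - 2 * (γ * L) + 1) - x * (2 * (γ * M) ^ 2 - 2 * (γ * M) + 1)
  set B := (2 * γ * L - 1) - x * (2 * γ * M - 1)
  set C := 1 - x
  have hquad : K * ((2 * (γ * (L + l)) ^ 2 - 2 * (γ * (L + l)) + 1) -
      x * (2 * (γ * (M + l)) ^ 2 - 2 * (γ * (M + l)) + 1)) - l * γ * D =
      2 * K * C * γ ^ 2 * (l * l) + γ * (2 * K * B - D) * l + K * A := by
    ring
  have hdiscrim : discrim (2 * K * C * γ ^ 2) (γ * (2 * K * B - D)) (K * A) =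
      γ ^ 2 * D * (D - 4 * K * (K + B)) := by
    rw [discrim, hD_def]; ring
  have hK : 2 ≤ K := by nlinarith
  have hKB : 1 ≤ K + B := by
    nlinarith [mul_nonneg hx (by nlinarith : (0 : ℝ) ≤ 1 - 2 * γ * M)]
  have hD1 : D ≤ 1 := by
    nlinarith [mul_nonneg (mul_nonneg (sq_nonneg γ) hx) (sq_nonneg (L - M))]
  have hnonneg := quadratic_nonneg_of_discrim_nonpos
    (mul_pos (mul_pos (by linarith) (by linarith)) (by positivity) : 0 < 2 * K * C * γ ^ 2)
    (hdiscrim.trans_le (mul_nonpos_of_nonneg_of_nonpos (by positivity) (by nlinarith))) l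
  linarith

/-- With `f₁(r) = r^{γ−1/2} log r` and `f₂(r) = r^{γ−1/2}` and
`D = (1 − (a/b)^{2γ})² − 4γ²(a/b)^{2γ} log²(b/a)`, one has `D > 0` and, for every
`λ > 0`, `λ b^{2γ}/log(1/b) ≤ (8γ²(1+γ)/D) ∫_a^b (f₁ + λ f₂)²`. -/
theorem statement8 (a b γ : ℝ) (ha : 0 < a) (hab : a < b) (hb : b ≤ Real.exp (-1))
    (hγ : 0 < γ) :
    0 < (1 - (a / b) ^ (2 * γ)) ^ 2 -
        4 * γ ^ 2 * (a / b) ^ (2 * γ) * Real.log (b / a) ^ 2 ∧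
      ∀ l : ℝ, 0 < l →
        l * b ^ (2 * γ) / Real.log (1 / b) ≤
          8 * γ ^ 2 * (1 + γ) /
              ((1 - (a / b) ^ (2 * γ)) ^ 2 -
                4 * γ ^ 2 * (a / b) ^ (2 * γ) * Real.log (b / a) ^ 2) *
            ∫ r in a..b, (r ^ (γ - 1 / 2) * Real.log r + l * r ^ (γ - 1 / 2)) ^ 2 := by
  have hb0 : 0 < b := ha.trans hab
  have hab0 : 0 < a / b := div_pos ha hb0
  have hab1 : a / b < 1 := (div_lt_one hb0).mpr hab
  have hD :
      0 < (1 - (a / b) ^ (2 * γ)) ^ 2 - 4 * γ ^ 2 * (a / b) ^ (2 * γ) * log (b / a) ^ 2 := by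
    have := four_mul_sq_mul_rpow_mul_log_sq_lt hab0 hab1.ne hγ.ne'
    rw [show log (a / b) ^ 2 = log (b / a) ^ 2 by rw [← inv_div, log_inv, neg_sq]] at this
    linarith
  refine ⟨hD, fun l _ => ?_⟩
  have hx1 : (a / b) ^ (2 * γ) < 1 := rpow_lt_one hab0.le hab1 (by positivity)
  have hL : log b ≤ -1 := by simpa using log_le_log hb0 hb
  have hv : a ^ (2 * γ) = (a / b) ^ (2 * γ) * b ^ (2 * γ) := by
    rw [div_rpow ha.le hb0.le, div_mul_cancel₀ _ (rpow_pos_of_pos hb0 _).ne']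
  have hint : ∫ r in a..b, (r ^ (γ - 1 / 2) * log r + l * r ^ (γ - 1 / 2)) ^ 2 =
      b ^ (2 * γ) * ((2 * (γ * (log b + l)) ^ 2 - 2 * (γ * (log b + l)) + 1) -
        (a / b) ^ (2 * γ) * (2 * (γ * (log a + l)) ^ 2 - 2 * (γ * (log a + l)) + 1)) /
          (4 * γ ^ 3) := by
    rw [eq_div_iff (by positivity), mul_comm, integral_rpow_sub_half_mul_log_add_sq ha hb0, hv]
    ring
  rw [log_div hb0.ne' ha.ne'] at hD ⊢
  have key := mul_discriminant_le_quadratic (rpow_pos_of_pos hab0 _).le hx1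
    (log_lt_log ha hab) hL hγ hD l
  set D := (1 - (a / b) ^ (2 * γ)) ^ 2 - 4 * γ ^ 2 * (a / b) ^ (2 * γ) * (log b - log a) ^ 2
  rw [hint, one_div, log_inv, div_le_iff₀ (by linarith)]
  field_simp
  linear_combination 4 * key
end

section
/- Let Ω ⊆ ℝ² be a nonempty open connected set and let v : Ω → ℝ be twice continuously differentiable with ∂₁∂₂v = 0 and ∂₁²v = ∂₂²v at every point of Ω (equivalently, identifying ℝ² with ℂ, the real-valued function v satisfies ∂_z²v = 0 on Ω). Then there exist real constants c₀, c₁, c₂, c₃ such that v(x₁, x₂) = c₀ + c₁·x₁ + c₂·x₂ + c₃·(x₁² + x₂²) for all (x₁, x₂) ∈ Ω; that is, the real kernel of ∂_z² is spanned by 1, Re z, Im z, and |z|². -/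
open MeasureTheory

noncomputable section

/-!
Since `v` is real, `∂_z² v = 0` says that `F = ∂₁v + i ∂₂v` is holomorphic, with complex
derivative `F' = ∂₁²v`. Being real-valued, `F'` is constant by the open mapping theorem, so
`F z = a z + b` with `a` real. The quadratic `b.re x₁ + b.im x₂ + a (x₁² + x₂²) / 2` has the
same gradient `(Re F, Im F)` as `v`, hence differs from `v` by a constant on the connected set `Ω`.
-/

open Complex

theorem Complex.realCLM_ext {E : Type*} [NormedAddCommGroup E] [NormedSpace ℝ E]
    {f g : ℂ →L[ℝ] E} (h1 : f 1 = g 1) (hI : f I = g I) : f = g :=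
  ContinuousLinearMap.coe_injective <| basisOneI.ext fun i => by fin_cases i <;> simpa

theorem hasFDerivAt_fderiv_apply_s11 {𝕜 E F : Type*} [NontriviallyNormedField 𝕜]
    [NormedAddCommGroup E] [NormedSpace 𝕜 E] [NormedAddCommGroup F] [NormedSpace 𝕜 F]
    {v : E → F} {z : E} (h : DifferentiableAt 𝕜 (fderiv 𝕜 v) z) (w : E) :
    HasFDerivAt (fun y => fderiv 𝕜 v y w) ((fderiv 𝕜 (fderiv 𝕜 v) z).flip w) z :=
  (ContinuousLinearMap.apply 𝕜 F w).hasFDerivAt.comp z h.hasFDerivAt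

/-- `2 · conj (∂_z v)`, the holomorphic function attached to a solution of `∂_z² v = 0`. -/
def complexGradient (v : ℂ → ℝ) (z : ℂ) : ℂ := pd1 v z + pd2 v z * I

theorem hasDerivAt_complexGradient {v : ℂ → ℝ} {z : ℂ} (hv : ContDiffAt ℝ 2 v z)
    (h1 : pd1 (pd2 v) z = 0) (h2 : pd1 (pd1 v) z = pd2 (pd2 v) z) :
    HasDerivAt (complexGradient v) (pd1 (pd1 v) z) z := by
  have hD : DifferentiableAt ℝ (fderiv ℝ v) z :=
    (hv.fderiv_right (m := 1) (by norm_num)).differentiableAt one_ne_zero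
  have hF := (ofRealCLM.hasFDerivAt.comp z (hasFDerivAt_fderiv_apply_s11 hD 1)).add
    ((ofRealCLM.hasFDerivAt.comp z (hasFDerivAt_fderiv_apply_s11 hD I)).mul_const I)
  -- `hF` identifies the real derivative as `u ↦ D2 u 1 + D2 u I • I`; by the hypotheses and
  -- the symmetry of `D2` it is multiplication by `∂₁²v`.
  set D2 := fderiv ℝ (fderiv ℝ v) z
  have hpd : ∀ w u, fderiv ℝ (fun y => fderiv ℝ v y w) z u = D2 u w := fun w u => by
    rw [(hasFDerivAt_fderiv_apply_s11 hD w).fderiv, ContinuousLinearMap.flip_apply]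
  have h11 : pd1 (pd1 v) z = D2 1 1 := hpd 1 1
  have h1I : D2 1 I = 0 := (hpd I 1).symm.trans h1
  have hI1 : D2 I 1 = 0 := by rw [hv.isSymmSndFDerivAt (by simp) I 1, h1I]
  have hII : D2 I I = D2 1 1 := by rw [← h11, h2]; exact (hpd I I).symm
  refine hasFDerivAt_of_restrictScalars ℝ hF (Complex.realCLM_ext ?_ ?_)
  · simp [h11, h1I]
  · simp [h11, hI1, hII]

theorem fderiv_eq_of_complexGradient_eq {v : ℂ → ℝ} {z w : ℂ} (h : complexGradient v z = w) :
    fderiv ℝ v z = w.re • reCLM + w.im • imCLM :=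
  Complex.realCLM_ext (by simp [← h, complexGradient]; rfl) (by simp [← h, complexGradient]; rfl)

theorem hasFDerivAt_quadratic (a : ℝ) (b : ℂ) (z : ℂ) :
    HasFDerivAt (fun y : ℂ => b.re * y.re + b.im * y.im + a / 2 * (y.re ^ 2 + y.im ^ 2))
      ((a * z + b).re • reCLM + (a * z + b).im • imCLM) z := by
  have h := ((reCLM.hasFDerivAt (x := z)).const_mul b.re).add
    ((imCLM.hasFDerivAt (x := z)).const_mul b.im) |>.add
    ((((reCLM.hasFDerivAt (x := z)).pow 2).add ((imCLM.hasFDerivAt (x := z)).pow 2)).const_mul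
      (a / 2))
  refine h.congr_fderiv ?_
  ext u
  simp
  ring

theorem AnalyticOnNhd.exists_eq_ofReal_of_im_eq_zero {f : ℂ → ℂ} {U : Set ℂ}
    (hf : AnalyticOnNhd ℂ f U) (hU : IsOpen U) (hU' : IsPreconnected U)
    (him : ∀ z ∈ U, (f z).im = 0) : ∃ a : ℝ, ∀ z ∈ U, f z = a := by
  obtain rfl | ⟨z₀, hz₀⟩ := U.eq_empty_or_nonempty
  · simp
  refine ⟨(f z₀).re, fun z hz => ?_⟩
  obtain ⟨w, hw⟩ := (hf.is_constant_or_isOpen hU').resolve_right fun hopen => by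
    obtain ⟨ε, hε, hball⟩ := Metric.isOpen_iff.1 (hopen U subset_rfl hU) (f z₀) ⟨z₀, hz₀, rfl⟩
    obtain ⟨y, hy, hfy⟩ := @hball (f z₀ + (ε / 2 : ℝ) * I) (by simp [abs_of_pos hε]; linarith)
    have hy_im := him y hy
    simp [hfy, him z₀ hz₀] at hy_im
    linarith
  rw [hw z hz, ← hw z₀ hz₀]
  exact Complex.ext (by simp) (by simp [him z₀ hz₀])

theorem statement11_general (Ω : Set ℂ) (hΩ : IsOpen Ω)
    (hconn : IsConnected Ω) (v : ℂ → ℝ) (hv : ContDiffOn ℝ 2 v Ω)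
    (h1 : ∀ z ∈ Ω, pd1 (pd2 v) z = 0)
    (h2 : ∀ z ∈ Ω, pd1 (pd1 v) z = pd2 (pd2 v) z) :
    ∃ c₀ c₁ c₂ c₃ : ℝ, ∀ z ∈ Ω,
      v z = c₀ + c₁ * z.re + c₂ * z.im + c₃ * (z.re ^ 2 + z.im ^ 2) := by
  have hF : ∀ z ∈ Ω, HasDerivAt (complexGradient v) (pd1 (pd1 v) z) z := fun z hz =>
    hasDerivAt_complexGradient (hv.contDiffAt (hΩ.mem_nhds hz)) (h1 z hz) (h2 z hz)
  have hFdiff : DifferentiableOn ℂ (complexGradient v) Ω := fun z hz =>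
    (hF z hz).differentiableAt.differentiableWithinAt
  obtain ⟨a, ha⟩ := (hFdiff.analyticOnNhd hΩ).deriv.exists_eq_ofReal_of_im_eq_zero hΩ
    hconn.isPreconnected fun z hz => by simp [(hF z hz).deriv]
  obtain ⟨b, hb⟩ := hΩ.exists_eq_add_of_deriv_eq hconn.isPreconnected hFdiff
    (g := fun z => (a : ℂ) * z) (differentiable_id.const_mul _).differentiableOn
    fun z hz => by simp [ha z hz]
  obtain ⟨c, hc⟩ := hΩ.exists_eq_add_of_fderiv_eq hconn.isPreconnected
    (hv.differentiableOn two_ne_zero)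
    (fun z _ => (hasFDerivAt_quadratic a b z).differentiableAt.differentiableWithinAt)
    fun z hz => by
      rw [(hasFDerivAt_quadratic a b z).fderiv, fderiv_eq_of_complexGradient_eq (hb hz)]
  exact ⟨c, b.re, b.im, a / 2, fun z hz => by rw [hc hz]; ring⟩

/-- The real kernel of `∂_z²` on a nonempty open connected set:
if `∂₁∂₂v = 0` and `∂₁²v = ∂₂²v` on `Ω`, then `v` is an affine combination of
`1`, `Re z`, `Im z` and `|z|²` on `Ω`. -/
theorem statement11 (Ω : Set ℂ) (hΩ : IsOpen Ω) (hne : Ω.Nonempty)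
    (hconn : IsConnected Ω) (v : ℂ → ℝ) (hv : ContDiffOn ℝ 2 v Ω)
    (h1 : ∀ z ∈ Ω, pd1 (pd2 v) z = 0)
    (h2 : ∀ z ∈ Ω, pd1 (pd1 v) z = pd2 (pd2 v) z) :
    ∃ c₀ c₁ c₂ c₃ : ℝ, ∀ z ∈ Ω,
      v z = c₀ + c₁ * z.re + c₂ * z.im + c₃ * (z.re ^ 2 + z.im ^ 2) :=
  statement11_general Ω hΩ hconn v hv h1 h2
end
end

section
/- There exists an explicit universal constant, namely (8/log 2)·√(3/π), with the following property. Let 0 < a < b, let Ω = {x ∈ ℝ² : a < |x| < b}, and let u : ℝ² → ℝ be twice continuously differentiable on Ω with Δu = 0 on Ω. Then for every x ∈ ℝ² with 2a < |x| < b/2, |∇u(x)| ≤ (8/log 2)·√(3/π)·(1/|x|)·‖∇u‖_{L^{2,∞}(Ω)}, where ‖F‖_{L^{2,∞}(Ω)} = sup_{t>0} t·(vol{y ∈ Ω : |F(y)| > t})^{1/2} is the weak-L² quasinorm with respect to Lebesgue measure on Ω. -/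
open MeasureTheory

noncomputable section

/-- The weak-`L²` quasinorm `sup_{t>0} t · vol{y ∈ Ω : F(y) > t}^{1/2}` (valued in
`ℝ≥0∞`) of a nonnegative function `F` on a set `Ω ⊆ ℝ² ≅ ℂ`. -/
def weakL2 (F : ℂ → ℝ) (Ω : Set ℂ) : ENNReal :=
  ⨆ (t : ℝ) (_ : 0 < t),
    ENNReal.ofReal t * (volume {y : ℂ | y ∈ Ω ∧ t < F y}) ^ (1 / 2 : ℝ)

/-!
The complex gradient `f = ∂₁u - i ∂₂u` of a harmonic function `u` is holomorphic, so `|f|`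
satisfies the sub-mean-value inequality on every disc `B = B(x, r) ⊆ Ω`:
`π r² |f(x)| ≤ ∫_B |f|`. By the layer-cake formula, bounding the distribution function of `|f|`
on `B` by `|B|` below a height `T` and by `‖f‖²_{L^{2,∞}} / t²` above it gives
`∫_B |f| ≤ |B| T + ‖f‖²_{L^{2,∞}} / T`, that is `∫_B |f| ≤ 2 |B|^{1/2} ‖f‖_{L^{2,∞}}` for the
best `T`. Taking `r = |x|/2` yields `|∇u(x)| ≤ (4/√π) ‖∇u‖_{L^{2,∞}(Ω)} / |x|`, and `4/√π` is
smaller than the constant `(8/log 2)·√(3/π)`.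
-/

open Complex InnerProductSpace Laplacian Metric Set
open scoped Real ENNReal

theorem isOpen_ann (a b : ℝ) : IsOpen (ann a b) :=
  (isOpen_lt continuous_const continuous_norm).inter (isOpen_lt continuous_norm continuous_const)

theorem closedBall_half_norm_subset_ann {a b : ℝ} {x : ℂ} (hx₁ : 2 * a < ‖x‖)
    (hx₂ : ‖x‖ < b / 2) : closedBall x (‖x‖ / 2) ⊆ ann a b := by
  intro y hy
  rw [mem_closedBall, dist_eq_norm] at hy
  have h₁ := norm_sub_norm_le x y
  have h₂ := norm_le_norm_add_norm_sub' y x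
  rw [norm_sub_rev] at h₁
  constructor <;> linarith [norm_nonneg x]

theorem laplacian_eq_lap {u : ℂ → ℝ} {z : ℂ} (hu : DifferentiableAt ℝ (fderiv ℝ u) z) :
    Δ u z = lap u z := by
  have hpd (v : ℂ) : fderiv ℝ (fun w ↦ fderiv ℝ u w v) z v = fderiv ℝ (fderiv ℝ u) z v v := by
    simp [fderiv_clm_apply hu (differentiableAt_const v)]
  simp only [laplacian_eq_iteratedFDeriv_complexPlane, iteratedFDeriv_two_apply]
  exact (congrArg₂ (· + ·) (hpd 1) (hpd I)).symm

theorem harmonicOnNhd_of_lap_eq_zero {u : ℂ → ℝ} {s : Set ℂ} (hs : IsOpen s)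
    (hu : ContDiffOn ℝ 2 u s) (hlap : ∀ z ∈ s, lap u z = 0) : HarmonicOnNhd u s := by
  intro z hz
  refine ⟨hu.contDiffAt (hs.mem_nhds hz), ?_⟩
  filter_upwards [hs.mem_nhds hz] with w hw
  have hdiff : DifferentiableAt ℝ (fderiv ℝ u) w :=
    ((hu.contDiffAt (hs.mem_nhds hw)).fderiv_right (m := 1) (by norm_num)).differentiableAt
      one_ne_zero
  rw [laplacian_eq_lap hdiff, hlap w hw, Pi.zero_apply]

def complexGrad (u : ℂ → ℝ) (z : ℂ) : ℂ := fderiv ℝ u z 1 - I * fderiv ℝ u z I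

theorem norm_complexGrad (u : ℂ → ℝ) (z : ℂ) :
    ‖complexGrad u z‖ = √(pd1 u z ^ 2 + pd2 u z ^ 2) := by
  rw [Complex.norm_def, Complex.normSq_apply]
  congr 1
  simp only [complexGrad, pd1, pd2, sub_re, ofReal_re, mul_re, I_re, zero_mul, I_im, ofReal_im,
    mul_zero, sub_self, sub_zero, sub_im, mul_im, one_mul, zero_add, zero_sub, mul_neg, neg_mul,
    neg_neg]
  ring

theorem measurable_complexGrad (u : ℂ → ℝ) : Measurable (complexGrad u) := by
  unfold complexGrad
  fun_prop

theorem differentiableOn_complexGrad {u : ℂ → ℝ} {s : Set ℂ} (hs : IsOpen s)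
    (hu : ContDiffOn ℝ 2 u s) (hlap : ∀ z ∈ s, lap u z = 0) :
    DifferentiableOn ℂ (complexGrad u) s := fun z hz ↦
  (HarmonicAt.differentiableAt_complex_partial
    (harmonicOnNhd_of_lap_eq_zero hs hu hlap z hz)).differentiableWithinAt

theorem norm_le_circleAverage_norm {E : Type*} [NormedAddCommGroup E] [NormedSpace ℂ E]
    [CompleteSpace E] {f : ℂ → E} {c : ℂ} {R : ℝ} (hf : DiffContOnCl ℂ f (ball c |R|)) :
    ‖f c‖ ≤ Real.circleAverage (‖f ·‖) c R := by
  rw [← hf.circleAverage, Real.circleAverage_def, Real.circleAverage_def, norm_smul,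
    Real.norm_of_nonneg (by positivity), smul_eq_mul]
  gcongr
  exact intervalIntegral.norm_integral_le_integral_norm (by positivity)

theorem ofReal_two_pi_mul_norm_le_lintegral_circle {E : Type*} [NormedAddCommGroup E]
    [NormedSpace ℂ E] [CompleteSpace E] {f : ℂ → E} {c : ℂ} {ρ : ℝ} (hρ : 0 < ρ)
    (hf : DiffContOnCl ℂ f (ball c ρ)) :
    ENNReal.ofReal (2 * π * ‖f c‖) ≤ ∫⁻ θ in Ioo (-π) π, ‖f (circleMap c ρ θ)‖ₑ := by
  have hcont : Continuous fun θ ↦ ‖f (circleMap c ρ θ)‖ := by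
    refine (hf.continuousOn.comp_continuous (continuous_circleMap c ρ) fun θ ↦ ?_).norm
    rw [closure_ball c hρ.ne']
    exact circleMap_mem_closedBall c hρ.le θ
  have hperiod : ∫ θ in 0..2 * π, ‖f (circleMap c ρ θ)‖ = ∫ θ in -π..π, ‖f (circleMap c ρ θ)‖ := by
    have hper : (fun θ ↦ ‖f (circleMap c ρ θ)‖).Periodic (2 * π) :=
      (periodic_circleMap c ρ).comp (‖f ·‖)
    convert hper.intervalIntegral_add_eq 0 (-π) using 2 <;> ring
  calc ENNReal.ofReal (2 * π * ‖f c‖)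
      ≤ ENNReal.ofReal (∫ θ in 0..2 * π, ‖f (circleMap c ρ θ)‖) := by
        gcongr
        have := norm_le_circleAverage_norm (R := ρ) (by rwa [abs_of_pos hρ])
        rwa [Real.circleAverage_def, smul_eq_mul, le_inv_mul_iff₀ (by positivity)] at this
    _ = ∫⁻ θ in Ioo (-π) π, ‖f (circleMap c ρ θ)‖ₑ := by
        rw [hperiod, intervalIntegral.integral_of_le (by linarith [Real.pi_pos]),
          integral_Ioc_eq_integral_Ioo, ofReal_integral_eq_lintegral_ofReal
            (hcont.integrableOn_Icc.mono_set Ioo_subset_Icc_self)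
            (ae_of_all _ fun _ ↦ norm_nonneg _)]
        simp only [ofReal_norm]

theorem add_polarCoord_symm_eq_circleMap (c : ℂ) (p : ℝ × ℝ) :
    c + Complex.polarCoord.symm p = circleMap c p.1 p.2 := by
  rw [Complex.polarCoord_symm_apply, circleMap, Complex.exp_mul_I]
  push_cast
  ring

theorem lintegral_polar_le_setLIntegral_closedBall {g : ℂ → ℝ≥0∞} (hg : Measurable g) (c : ℂ)
    (r : ℝ) :
    ∫⁻ ρ in Ioc 0 r, ∫⁻ θ in Ioo (-π) π, ENNReal.ofReal ρ * g (circleMap c ρ θ) ≤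
      ∫⁻ y in closedBall c r, g y := by
  set G := (closedBall c r).indicator g
  have hsub : Ioc 0 r ×ˢ Ioo (-π) π ⊆ polarCoord.target :=
    prod_mono Ioc_subset_Ioi_self subset_rfl
  have hmeas : Measurable fun p : ℝ × ℝ ↦ ENNReal.ofReal p.1 * g (circleMap c p.1 p.2) := by
    refine ENNReal.measurable_ofReal.comp measurable_fst |>.mul (hg.comp ?_)
    unfold circleMap
    fun_prop
  calc ∫⁻ ρ in Ioc 0 r, ∫⁻ θ in Ioo (-π) π, ENNReal.ofReal ρ * g (circleMap c ρ θ)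
      = ∫⁻ p in Ioc 0 r ×ˢ Ioo (-π) π, ENNReal.ofReal p.1 * g (circleMap c p.1 p.2) := by
        rw [Measure.volume_eq_prod, setLIntegral_prod _ hmeas.aemeasurable]
    _ = ∫⁻ p in Ioc 0 r ×ˢ Ioo (-π) π, ENNReal.ofReal p.1 • G (c + Complex.polarCoord.symm p) := by
        refine setLIntegral_congr_fun (measurableSet_Ioc.prod measurableSet_Ioo) fun p hp ↦ ?_
        have hp' : circleMap c p.1 p.2 ∈ closedBall c r :=
          closedBall_subset_closedBall hp.1.2 (circleMap_mem_closedBall c hp.1.1.le p.2)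
        simp only [add_polarCoord_symm_eq_circleMap, smul_eq_mul, G, indicator_of_mem hp']
    _ ≤ ∫⁻ p in polarCoord.target, ENNReal.ofReal p.1 • G (c + Complex.polarCoord.symm p) :=
        lintegral_mono_set hsub
    _ = ∫⁻ y, G (c + y) := Complex.lintegral_comp_polarCoord_symm fun y ↦ G (c + y)
    _ = ∫⁻ y in closedBall c r, g y := by
        rw [lintegral_add_left_eq_self, lintegral_indicator measurableSet_closedBall]

theorem setLIntegral_Ioc_ofReal_id {r : ℝ} (hr : 0 ≤ r) :
    ∫⁻ ρ in Ioc 0 r, ENNReal.ofReal ρ = ENNReal.ofReal (r ^ 2 / 2) := by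
  have hnonneg : ∀ᵐ ρ ∂(volume.restrict (Ioc (0 : ℝ) r)), 0 ≤ ρ :=
    (ae_restrict_iff' measurableSet_Ioc).2 (ae_of_all _ fun ρ hρ ↦ hρ.1.le)
  rw [← ofReal_integral_eq_lintegral_ofReal continuous_id'.integrableOn_Ioc hnonneg,
    ← intervalIntegral.integral_of_le hr, integral_id]
  norm_num

theorem ofReal_pi_mul_sq_mul_norm_le_setLIntegral_closedBall {E : Type*} [NormedAddCommGroup E]
    [NormedSpace ℂ E] [CompleteSpace E] [MeasurableSpace E] [BorelSpace E] {f : ℂ → E}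
    {c : ℂ} {r : ℝ} (hr : 0 ≤ r) (hf : DifferentiableOn ℂ f (closedBall c r))
    (hm : Measurable f) :
    ENNReal.ofReal (π * r ^ 2 * ‖f c‖) ≤ ∫⁻ y in closedBall c r, ‖f y‖ₑ := by
  have hcircle (ρ : ℝ) (hρ : ρ ∈ Ioc 0 r) :
      ENNReal.ofReal (2 * π * ‖f c‖) ≤ ∫⁻ θ in Ioo (-π) π, ‖f (circleMap c ρ θ)‖ₑ := by
    refine ofReal_two_pi_mul_norm_le_lintegral_circle hρ.1 (DifferentiableOn.diffContOnCl ?_)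
    rw [closure_ball c hρ.1.ne']
    exact hf.mono (closedBall_subset_closedBall hρ.2)
  calc ENNReal.ofReal (π * r ^ 2 * ‖f c‖)
      = ∫⁻ ρ in Ioc 0 r, ENNReal.ofReal ρ * ENNReal.ofReal (2 * π * ‖f c‖) := by
        rw [lintegral_mul_const' _ _ ENNReal.ofReal_ne_top, setLIntegral_Ioc_ofReal_id hr,
          ← ENNReal.ofReal_mul (by positivity)]
        ring_nf
    _ ≤ ∫⁻ ρ in Ioc 0 r, ∫⁻ θ in Ioo (-π) π, ENNReal.ofReal ρ * ‖f (circleMap c ρ θ)‖ₑ := by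
        refine setLIntegral_mono' measurableSet_Ioc fun ρ hρ ↦ ?_
        rw [lintegral_const_mul' _ _ ENNReal.ofReal_ne_top]
        gcongr
        exact hcircle ρ hρ
    _ ≤ ∫⁻ y in closedBall c r, ‖f y‖ₑ :=
        lintegral_polar_le_setLIntegral_closedBall hm.enorm c r

theorem lintegral_Ioi_ofReal_rpow_neg_two {T : ℝ} (hT : 0 < T) :
    ∫⁻ t in Ioi T, ENNReal.ofReal (t ^ (-2 : ℝ)) = ENNReal.ofReal T⁻¹ := by
  have hnonneg : ∀ᵐ t ∂(volume.restrict (Ioi T)), 0 ≤ t ^ (-2 : ℝ) :=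
    (ae_restrict_iff' measurableSet_Ioi).2 (ae_of_all _ fun t ht ↦ by
      have : 0 < t := hT.trans ht
      positivity)
  rw [← ofReal_integral_eq_lintegral_ofReal (integrableOn_Ioi_rpow_of_lt (by norm_num) hT) hnonneg,
    integral_Ioi_rpow_of_lt (by norm_num) hT]
  norm_num [Real.rpow_neg_one]

theorem ENNReal.le_ofReal_two_mul_of_forall_le_mul_add_div {a : ℝ≥0∞} {s w : ℝ} (hs : 0 < s)
    (hw : 0 ≤ w) (h : ∀ T > 0, a ≤ ENNReal.ofReal (s ^ 2 * T + w ^ 2 / T)) :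
    a ≤ ENNReal.ofReal (2 * s * w) := by
  refine ENNReal.le_of_forall_pos_le_add fun ε hε _ ↦ ?_
  have hε' : (0 : ℝ) < ε := hε
  -- a near-optimal `T`: then `s ^ 2 * T = s * w + ε` and `w ^ 2 / T ≤ s * w`
  obtain ⟨T, hT, h₁⟩ : ∃ T > 0, s ^ 2 * T = s * w + ε :=
    ⟨(s * w + ε) / s ^ 2, by positivity, by field_simp⟩
  have h₂ : w ^ 2 / T ≤ s * w := by
    rw [div_le_iff₀ hT]
    refine le_of_mul_le_mul_left ?_ (by positivity : 0 < s ^ 2)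
    rw [show s ^ 2 * (s * w * T) = s * w * (s * w + ε) by rw [← h₁]; ring]
    nlinarith [mul_nonneg (mul_nonneg hs.le hw) hε'.le]
  calc a ≤ ENNReal.ofReal (s ^ 2 * T + w ^ 2 / T) := h T hT
    _ ≤ ENNReal.ofReal (2 * s * w + ε) := ENNReal.ofReal_le_ofReal (by linarith)
    _ = ENNReal.ofReal (2 * s * w) + ε := by
        rw [ENNReal.ofReal_add (by positivity) hε'.le, ENNReal.ofReal_coe_nnreal]

section WeakL2

variable {α : Type*} [MeasurableSpace α] {μ : Measure α} {F : α → ℝ} {W : ℝ≥0∞}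

theorem measure_lt_le_sq_mul_rpow_neg_two {t : ℝ} (ht : 0 < t)
    (hW : ENNReal.ofReal t * μ {y | t < F y} ^ (1 / 2 : ℝ) ≤ W) :
    μ {y | t < F y} ≤ W ^ 2 * ENNReal.ofReal (t ^ (-2 : ℝ)) := by
  have hroot : μ {y | t < F y} ^ (1 / 2 : ℝ) ≤ W / ENNReal.ofReal t := by
    rw [ENNReal.le_div_iff_mul_le (Or.inl (by simpa using ht)) (Or.inl ENNReal.ofReal_ne_top),
      mul_comm]
    exact hW
  calc μ {y | t < F y} = (μ {y | t < F y} ^ (1 / 2 : ℝ)) ^ 2 := by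
        rw [← ENNReal.rpow_natCast, ← ENNReal.rpow_mul]
        norm_num
    _ ≤ (W / ENNReal.ofReal t) ^ 2 := by gcongr
    _ = W ^ 2 * ENNReal.ofReal (t ^ (-2 : ℝ)) := by
        rw [div_eq_mul_inv, mul_pow, ← ENNReal.ofReal_inv_of_pos ht, ← ENNReal.ofReal_pow
          (by positivity), Real.rpow_neg ht.le, Real.rpow_two, inv_pow]

theorem lintegral_ofReal_le_measure_univ_mul_add
    (hF₀ : 0 ≤ᵐ[μ] F) (hFm : AEMeasurable F μ)
    (hW : ∀ t > 0, ENNReal.ofReal t * μ {y | t < F y} ^ (1 / 2 : ℝ) ≤ W) {T : ℝ} (hT : 0 < T) :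
    ∫⁻ y, ENNReal.ofReal (F y) ∂μ ≤ μ univ * ENNReal.ofReal T + W ^ 2 * ENNReal.ofReal T⁻¹ := by
  rw [lintegral_eq_lintegral_meas_lt μ hF₀ hFm, ← Ioc_union_Ioi_eq_Ioi hT.le,
    lintegral_union measurableSet_Ioi (Ioc_disjoint_Ioi le_rfl)]
  gcongr ?_ + ?_
  · calc ∫⁻ t in Ioc 0 T, μ {y | t < F y} ≤ ∫⁻ t in Ioc 0 T, μ univ :=
          lintegral_mono fun t ↦ measure_mono (subset_univ _)
      _ = μ univ * ENNReal.ofReal T := by simp [Real.volume_Ioc]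
  · calc ∫⁻ t in Ioi T, μ {y | t < F y}
        ≤ ∫⁻ t in Ioi T, W ^ 2 * ENNReal.ofReal (t ^ (-2 : ℝ)) :=
          setLIntegral_mono' measurableSet_Ioi fun t ht ↦
            measure_lt_le_sq_mul_rpow_neg_two (hT.trans ht) (hW t (hT.trans ht))
      _ = W ^ 2 * ENNReal.ofReal T⁻¹ := by
          rw [lintegral_const_mul _ (by fun_prop), lintegral_Ioi_ofReal_rpow_neg_two hT]

theorem lintegral_ofReal_le_two_mul_of_weakL2_bound
    (hF₀ : 0 ≤ᵐ[μ] F) (hFm : AEMeasurable F μ)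
    (hW : ∀ t > 0, ENNReal.ofReal t * μ {y | t < F y} ^ (1 / 2 : ℝ) ≤ W) {s : ℝ} (hs : 0 < s)
    (hμ : μ univ ≤ ENNReal.ofReal (s ^ 2)) :
    ∫⁻ y, ENNReal.ofReal (F y) ∂μ ≤ ENNReal.ofReal (2 * s) * W := by
  rcases eq_or_ne W ∞ with rfl | hW_top
  · rw [ENNReal.mul_top (by positivity)]
    exact le_top
  obtain ⟨w, hw, rfl⟩ : ∃ w, 0 ≤ w ∧ W = ENNReal.ofReal w :=
    ⟨W.toReal, ENNReal.toReal_nonneg, (ENNReal.ofReal_toReal hW_top).symm⟩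
  rw [← ENNReal.ofReal_mul (by positivity)]
  refine ENNReal.le_ofReal_two_mul_of_forall_le_mul_add_div hs hw
    fun T hT ↦ (lintegral_ofReal_le_measure_univ_mul_add hF₀ hFm hW hT).trans ?_
  rw [ENNReal.ofReal_add (by positivity) (by positivity), ENNReal.ofReal_mul (by positivity),
    div_eq_mul_inv, ENNReal.ofReal_mul (by positivity), ENNReal.ofReal_pow hw]
  gcongr

end WeakL2

theorem volume_closedBall_eq_ofReal_sq (c : ℂ) {r : ℝ} (hr : 0 ≤ r) :
    volume (closedBall c r) = ENNReal.ofReal ((√π * r) ^ 2) := by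
  rw [Complex.volume_closedBall, mul_pow, Real.sq_sqrt Real.pi_pos.le,
    ENNReal.ofReal_mul Real.pi_pos.le, ENNReal.ofReal_pow hr, mul_comm, ← NNReal.coe_real_pi,
    ENNReal.ofReal_coe_nnreal]

theorem ofReal_norm_le_of_weakL2_bound {E : Type*} [NormedAddCommGroup E] [NormedSpace ℂ E]
    [CompleteSpace E] [MeasurableSpace E] [BorelSpace E] {f : ℂ → E} {c : ℂ} {r : ℝ}
    {W : ℝ≥0∞} (hr : 0 < r) (hf : DifferentiableOn ℂ f (closedBall c r)) (hm : Measurable f)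
    (hW : ∀ t > 0, ENNReal.ofReal t *
      volume.restrict (closedBall c r) {y | t < ‖f y‖} ^ (1 / 2 : ℝ) ≤ W) :
    ENNReal.ofReal ‖f c‖ ≤ ENNReal.ofReal (2 / (√π * r)) * W := by
  have hmean := ofReal_pi_mul_sq_mul_norm_le_setLIntegral_closedBall hr.le hf hm
  have hweak := lintegral_ofReal_le_two_mul_of_weakL2_bound (ae_of_all _ fun y ↦ norm_nonneg _)
    hm.norm.aemeasurable hW (s := √π * r) (by positivity)
    (by rw [Measure.restrict_apply_univ, volume_closedBall_eq_ofReal_sq c hr.le])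
  simp only [ofReal_norm] at hweak
  calc ENNReal.ofReal ‖f c‖
      = ENNReal.ofReal (π * r ^ 2)⁻¹ * ENNReal.ofReal (π * r ^ 2 * ‖f c‖) := by
        rw [← ENNReal.ofReal_mul (by positivity), ← mul_assoc, inv_mul_cancel₀ (by positivity),
          one_mul]
    _ ≤ ENNReal.ofReal (π * r ^ 2)⁻¹ * (ENNReal.ofReal (2 * (√π * r)) * W) := by
        gcongr
        exact hmean.trans hweak
    _ = ENNReal.ofReal (2 / (√π * r)) * W := by
        rw [← mul_assoc, ← ENNReal.ofReal_mul (by positivity)]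
        have hsπ : 0 < √π := Real.sqrt_pos.mpr Real.pi_pos
        nth_rewrite 1 [← Real.sq_sqrt Real.pi_pos.le]
        congr 2
        field_simp

theorem ofReal_mul_restrict_rpow_le_weakL2 {F : ℂ → ℝ} (hF : Measurable F) {s Ω : Set ℂ}
    (hs : s ⊆ Ω) {t : ℝ} (ht : 0 < t) :
    ENNReal.ofReal t * volume.restrict s {y | t < F y} ^ (1 / 2 : ℝ) ≤ weakL2 F Ω := by
  refine le_trans ?_ (le_iSup₂ (f := fun (t : ℝ) (_ : 0 < t) ↦ ENNReal.ofReal t *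
    volume {y | y ∈ Ω ∧ t < F y} ^ (1 / 2 : ℝ)) t ht)
  gcongr ENNReal.ofReal t * ?_ ^ _
  rw [Measure.restrict_apply (measurableSet_lt measurable_const hF)]
  exact measure_mono fun y hy ↦ ⟨hs hy.2, hy.1⟩

theorem four_div_sqrt_pi_le : 4 / √π ≤ 8 / Real.log 2 * √(3 / π) := by
  have hlog : Real.log 2 ≤ 1 := (Real.log_le_sub_one_of_pos two_pos).trans (by norm_num)
  have h8 : 8 ≤ 8 / Real.log 2 := by
    rw [le_div_iff₀ (Real.log_pos one_lt_two)]
    linarith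
  have h3 : 1 ≤ √3 := Real.one_le_sqrt.mpr (by norm_num)
  calc 4 / √π ≤ 8 * 1 / √π := by gcongr; norm_num
    _ ≤ 8 / Real.log 2 * √3 / √π := by gcongr
    _ = 8 / Real.log 2 * √(3 / π) := by rw [Real.sqrt_div (by norm_num)]; ring

theorem statement16_general (a b : ℝ) (ha : 0 < a) (u : ℂ → ℝ)
    (hu : ContDiffOn ℝ 2 u (ann a b)) (hharm : ∀ z ∈ ann a b, lap u z = 0) :
    ∀ x : ℂ, 2 * a < ‖x‖ → ‖x‖ < b / 2 →
      ENNReal.ofReal (Real.sqrt (pd1 u x ^ 2 + pd2 u x ^ 2)) ≤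
        ENNReal.ofReal (8 / Real.log 2 * Real.sqrt (3 / Real.pi) *
            (1 / ‖x‖)) *
          weakL2 (fun y => Real.sqrt (pd1 u y ^ 2 + pd2 u y ^ 2)) (ann a b) := by
  intro x hx₁ hx₂
  have hx : 0 < ‖x‖ := by linarith
  have hball := closedBall_half_norm_subset_ann hx₁ hx₂
  simp_rw [← norm_complexGrad]
  calc ENNReal.ofReal ‖complexGrad u x‖
      ≤ ENNReal.ofReal (2 / (√π * (‖x‖ / 2))) * weakL2 (‖complexGrad u ·‖) (ann a b) :=
        ofReal_norm_le_of_weakL2_bound (by positivity)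
          ((differentiableOn_complexGrad (isOpen_ann a b) hu hharm).mono hball)
          (measurable_complexGrad u) fun t ↦
            ofReal_mul_restrict_rpow_le_weakL2 (measurable_complexGrad u).norm hball
    _ ≤ _ := by
        gcongr
        calc 2 / (√π * (‖x‖ / 2)) = 4 / √π * (1 / ‖x‖) := by field_simp; ring
          _ ≤ _ := by gcongr; exact four_div_sqrt_pi_le

/-- Pointwise interior gradient estimate for harmonic functions on an
annulus in terms of the weak-`L²` norm of the gradient, with the explicit universal
constant `(8/log 2)·√(3/π)`. -/
theorem statement16 (a b : ℝ) (ha : 0 < a) (hab : a < b) (u : ℂ → ℝ)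
    (hu : ContDiffOn ℝ 2 u (ann a b)) (hharm : ∀ z ∈ ann a b, lap u z = 0) :
    ∀ x : ℂ, 2 * a < ‖x‖ → ‖x‖ < b / 2 →
      ENNReal.ofReal (Real.sqrt (pd1 u x ^ 2 + pd2 u x ^ 2)) ≤
        ENNReal.ofReal (8 / Real.log 2 * Real.sqrt (3 / Real.pi) *
            (1 / ‖x‖)) *
          weakL2 (fun y => Real.sqrt (pd1 u y ^ 2 + pd2 u y ^ 2)) (ann a b) :=
  statement16_general a b ha u hu hharm
end
end

section
/- For every real α > −1 and every real t > 0, one has 1 − (2α+3)²·(e^{−2(α+1)t} + e^{−2(α+2)t}) + 8(α+1)(α+2)·e^{−(2α+3)t} + e^{−2(2α+3)t} > 0. -/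
/-!
Write `m = 2α + 3`. Then `Λ α 0 = 0` and `∂ₜΛ = 2m e^{-mt} Λ₁`, where again `Λ₁ α 0 = 0` and
`∂ₜΛ₁ = m Λ₂`, and once more `Λ₂ α 0 = 0`. Finally `∂ₜΛ₂ = (α+1)eᵗ + (α+2)e⁻ᵗ - m e^{-mt}` exceeds
`(α+1)(eᵗ - e⁻ᵗ) > 0` for `t > 0`, because `m > 1` gives `e^{-mt} < e⁻ᵗ`. Positivity then
propagates back up the chain: a function vanishing at `0` with positive derivative on `(0, ∞)`
is positive there.
-/

open Real Set

noncomputable section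

lemma pos_of_hasDerivAt_of_eq_zero {f f' : ℝ → ℝ} {a t : ℝ} (hf : ∀ x, HasDerivAt f (f' x) x)
    (ha : f a = 0) (hf' : ∀ x, a < x → 0 < f' x) (ht : a < t) : 0 < f t := by
  have hmono : StrictMonoOn f (Ici a) :=
    strictMonoOn_of_deriv_pos (convex_Ici a) (fun x _ ↦ (hf x).continuousAt.continuousWithinAt)
      fun x hx ↦ by rw [(hf x).deriv]; exact hf' x (by rwa [interior_Ici] at hx)
  simpa [ha] using hmono self_mem_Ici ht.le ht

lemma hasDerivAt_exp_const_mul (c x : ℝ) :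
    HasDerivAt (fun y ↦ exp (c * y)) (c * exp (c * x)) x := by
  simpa [mul_comm] using ((hasDerivAt_id x).const_mul c).exp

def Λ (α t : ℝ) : ℝ :=
  1 - (2 * α + 3) ^ 2 * (exp (-2 * (α + 1) * t) + exp (-2 * (α + 2) * t)) +
    8 * (α + 1) * (α + 2) * exp (-(2 * α + 3) * t) + exp (-2 * (2 * α + 3) * t)

def Λ₁ (α t : ℝ) : ℝ :=
  (2 * α + 3) * ((α + 1) * exp t + (α + 2) * exp (-t)) - 4 * (α + 1) * (α + 2) -
    exp (-(2 * α + 3) * t)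

def Λ₂ (α t : ℝ) : ℝ :=
  (α + 1) * exp t - (α + 2) * exp (-t) + exp (-(2 * α + 3) * t)

section

variable {α : ℝ}

lemma hasDerivAt_Λ₂ (t : ℝ) :
    HasDerivAt (Λ₂ α)
      ((α + 1) * exp t + (α + 2) * exp (-t) - (2 * α + 3) * exp (-(2 * α + 3) * t)) t := by
  have h := (((hasDerivAt_exp t).const_mul (α + 1)).sub
    ((hasDerivAt_neg t).exp.const_mul (α + 2))).add (hasDerivAt_exp_const_mul (-(2 * α + 3)) t)
  exact h.congr_deriv (by ring)

lemma hasDerivAt_Λ₁ (t : ℝ) : HasDerivAt (Λ₁ α) ((2 * α + 3) * Λ₂ α t) t := by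
  have h := (((((hasDerivAt_exp t).const_mul (α + 1)).add
    ((hasDerivAt_neg t).exp.const_mul (α + 2))).const_mul (2 * α + 3)).sub_const
    (4 * (α + 1) * (α + 2))).sub (hasDerivAt_exp_const_mul (-(2 * α + 3)) t)
  exact h.congr_deriv (by rw [Λ₂]; ring)

lemma hasDerivAt_Λ (t : ℝ) :
    HasDerivAt (Λ α) (2 * (2 * α + 3) * exp (-(2 * α + 3) * t) * Λ₁ α t) t := by
  have h := ((((hasDerivAt_exp_const_mul (-2 * (α + 1)) t).add
    (hasDerivAt_exp_const_mul (-2 * (α + 2)) t)).const_mul ((2 * α + 3) ^ 2)).const_sub 1).add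
    ((hasDerivAt_exp_const_mul (-(2 * α + 3)) t).const_mul (8 * (α + 1) * (α + 2))) |>.add
    (hasDerivAt_exp_const_mul (-2 * (2 * α + 3)) t)
  refine h.congr_deriv ?_
  have e₁ : exp (-2 * (α + 1) * t) = exp (-(2 * α + 3) * t) * exp t := by
    rw [← exp_add]; ring_nf
  have e₂ : exp (-2 * (α + 2) * t) = exp (-(2 * α + 3) * t) * exp (-t) := by
    rw [← exp_add]; ring_nf
  have e₃ : exp (-2 * (2 * α + 3) * t) = exp (-(2 * α + 3) * t) * exp (-(2 * α + 3) * t) := by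
    rw [← exp_add]; ring_nf
  rw [e₁, e₂, e₃, Λ₁]
  ring

variable (hα : -1 < α)
include hα

lemma Λ₂_pos {t : ℝ} (ht : 0 < t) : 0 < Λ₂ α t := by
  refine pos_of_hasDerivAt_of_eq_zero hasDerivAt_Λ₂ (by norm_num [Λ₂]) (fun x hx ↦ ?_) ht
  have h₁ : exp (-(2 * α + 3) * x) < exp (-x) := exp_lt_exp.2 (by nlinarith)
  have h₂ : exp (-x) < exp x := exp_lt_exp.2 (by linarith)
  nlinarith

lemma Λ₁_pos {t : ℝ} (ht : 0 < t) : 0 < Λ₁ α t :=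
  pos_of_hasDerivAt_of_eq_zero hasDerivAt_Λ₁ (by norm_num [Λ₁]; ring)
    (fun x hx ↦ mul_pos (by linarith) (Λ₂_pos hα hx)) ht

lemma Λ_pos {t : ℝ} (ht : 0 < t) : 0 < Λ α t :=
  pos_of_hasDerivAt_of_eq_zero hasDerivAt_Λ (by norm_num [Λ]; ring)
    (fun x hx ↦ mul_pos (mul_pos (by linarith) (exp_pos _)) (Λ₁_pos hα hx)) ht

end

end

/-- Positivity of the quantity `Λ(α, t)` arising from the exact
evaluation of the second-moment double integral
`∫_a^b∫_a^b (r−s)² r^{2α+1} s^{2α+1} dr ds`. -/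
theorem statement17 (α t : ℝ) (hα : -1 < α) (ht : 0 < t) :
    0 < 1 - (2 * α + 3) ^ 2 *
          (Real.exp (-2 * (α + 1) * t) + Real.exp (-2 * (α + 2) * t)) +
        8 * (α + 1) * (α + 2) * Real.exp (-(2 * α + 3) * t) +
        Real.exp (-2 * (2 * α + 3) * t) :=
  Λ_pos hα ht
end

section
/- Let α₁ > −1 and α₂ > −1 be real numbers, let n be a nonzero integer, let 𝔞₁, 𝔞₂ ∈ ℂ, and let 0 < a < b. Define f on ℂ \ {0} by f(z) = Re( (𝔞₁·|z|^{α₁} + 𝔞₂·|z|^{α₂})·(z/|z|)ⁿ ). Then, with Ω = {z ∈ ℂ : a < |z| < b}, one has ∫_Ω f(z)² dz = π·( (|𝔞₁|²/(2(α₁+1)))·b^{2(α₁+1)}·(1 − (a/b)^{2(α₁+1)}) + (|𝔞₂|²/(2(α₂+1)))·b^{2(α₂+1)}·(1 − (a/b)^{2(α₂+1)}) + (2·Re(𝔞₁·conj(𝔞₂))/(α₁+α₂+2))·b^{α₁+α₂+2}·(1 − (a/b)^{α₁+α₂+2}) ). -/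
open MeasureTheory

noncomputable section

/-!
In polar coordinates `z = r e^{iθ}` the integrand is `(Re (c(r) e^{inθ}))²` with
`c(r) = 𝔞₁ r^{α₁} + 𝔞₂ r^{α₂}`. Since `n ≠ 0`, the cross term `cos(nθ) sin(nθ)` integrates to zero
and `cos²(nθ)`, `sin²(nθ)` each integrate to `π` over a period, so the angular integral is
`π |c(r)|²`. The area element `r dr dθ` leaves `π ∫_a^b r |c(r)|² dr`, a sum of three power
integrals.
-/

open Real Set

section PolarCoordinates

variable {E : Type*} [NormedAddCommGroup E] [NormedSpace ℝ E]

theorem Complex.continuous_polarCoord_symm : Continuous Complex.polarCoord.symm := by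
  simp only [funext Complex.polarCoord_symm_apply]
  fun_prop

theorem Complex.polarCoord_symm_div_fst {r : ℝ} (hr : r ≠ 0) (θ : ℝ) :
    Complex.polarCoord.symm (r, θ) / r = exp (θ * I) := by
  rw [Complex.polarCoord_symm_apply, exp_mul_I, ← ofReal_cos, ← ofReal_sin,
    mul_div_cancel_left₀ _ (ofReal_ne_zero.mpr hr)]

theorem Complex.setIntegral_comp_polarCoord_symm (f : ℂ → E) {s : Set ℂ} (hs : MeasurableSet s) :
    ∫ p in polarCoord.target ∩ Complex.polarCoord.symm ⁻¹' s,
        p.1 • f (Complex.polarCoord.symm p) = ∫ z in s, f z := by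
  rw [← setIntegral_indicator (hs.preimage Complex.continuous_polarCoord_symm.measurable),
    ← integral_indicator hs, ← Complex.integral_comp_polarCoord_symm]
  simp only [indicator_smul_apply, ← indicator_comp_right, Function.comp_def]

theorem polarCoord_target_inter_preimage_ann {a b : ℝ} (ha : 0 ≤ a) :
    polarCoord.target ∩ Complex.polarCoord.symm ⁻¹' ann a b = Ioo a b ×ˢ Ioo (-π) π := by
  ext ⟨r, θ⟩
  simp only [polarCoord_target, ann, mem_inter_iff, mem_prod, mem_Ioi, mem_preimage,
    mem_ofPred_eq, Complex.norm_polarCoord_symm, mem_Ioo]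
  constructor
  · rintro ⟨⟨hr, hθ⟩, hra, hrb⟩
    rw [abs_of_pos hr] at hra hrb
    exact ⟨⟨hra, hrb⟩, hθ⟩
  · rintro ⟨⟨hra, hrb⟩, hθ⟩
    have hr : 0 < r := ha.trans_lt hra
    rw [abs_of_pos hr]
    exact ⟨⟨hr, hθ⟩, hra, hrb⟩

theorem setIntegral_Ioo_prod_Ioo {g : ℝ × ℝ → E} {a b c d : ℝ} (hab : a ≤ b) (hcd : c ≤ d)
    (hg : ContinuousOn g (Icc a b ×ˢ Icc c d)) :
    ∫ p in Ioo a b ×ˢ Ioo c d, g p = ∫ x in a..b, ∫ y in c..d, g (x, y) := by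
  have hint : IntegrableOn g (Ioo a b ×ˢ Ioo c d) :=
    (hg.integrableOn_compact (isCompact_Icc.prod isCompact_Icc)).mono_set
      (prod_mono Ioo_subset_Icc_self Ioo_subset_Icc_self)
  rw [Measure.volume_eq_prod] at hint ⊢
  simp only [setIntegral_prod _ hint, intervalIntegral.integral_of_le hab,
    intervalIntegral.integral_of_le hcd, integral_Ioc_eq_integral_Ioo]

theorem setIntegral_ann_eq_integral_polar {f : ℂ → E} {a b : ℝ} (ha : 0 ≤ a) (hab : a ≤ b)
    (hf : ContinuousOn f {z | a ≤ ‖z‖ ∧ ‖z‖ ≤ b}) :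
    ∫ z in ann a b, f z = ∫ r in a..b, r • ∫ θ in (-π)..π, f (Complex.polarCoord.symm (r, θ)) := by
  have hann : MeasurableSet (ann a b) :=
    (isOpen_Ioo.preimage continuous_norm).measurableSet
  rw [← Complex.setIntegral_comp_polarCoord_symm f hann,
    polarCoord_target_inter_preimage_ann ha, setIntegral_Ioo_prod_Ioo hab (by linarith [pi_pos])]
  · simp only [intervalIntegral.integral_smul]
  · refine continuousOn_fst.smul (hf.comp Complex.continuous_polarCoord_symm.continuousOn ?_)
    rintro ⟨r, θ⟩ ⟨⟨hra, hrb⟩, -⟩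
    simp only [mem_ofPred_eq, Complex.norm_polarCoord_symm, abs_of_nonneg (ha.trans hra)]
    exact ⟨hra, hrb⟩

end PolarCoordinates

section FourierMode

variable {n : ℤ}

theorem integral_cos_int_mul_sq (hn : n ≠ 0) : ∫ θ in (-π)..π, cos (n * θ) ^ 2 = π := by
  have hn' : (n : ℝ) ≠ 0 := Int.cast_ne_zero.mpr hn
  rw [intervalIntegral.integral_comp_mul_left (fun u => cos u ^ 2) hn', integral_cos_sq,
    mul_neg, sin_neg, sin_int_mul_pi, smul_eq_mul]
  field_simp
  ring

theorem integral_sin_int_mul_sq (hn : n ≠ 0) : ∫ θ in (-π)..π, sin (n * θ) ^ 2 = π := by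
  have hn' : (n : ℝ) ≠ 0 := Int.cast_ne_zero.mpr hn
  rw [intervalIntegral.integral_comp_mul_left (fun u => sin u ^ 2) hn', integral_sin_sq,
    mul_neg, sin_neg, sin_int_mul_pi, smul_eq_mul]
  field_simp
  ring

theorem integral_sin_int_mul_mul_cos_int_mul (hn : n ≠ 0) :
    ∫ θ in (-π)..π, sin (n * θ) * cos (n * θ) = 0 := by
  rw [intervalIntegral.integral_comp_mul_left (fun u => sin u * cos u) (Int.cast_ne_zero.mpr hn),
    integral_sin_mul_cos₁, mul_neg, sin_neg, sin_int_mul_pi]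
  simp

theorem Complex.re_mul_exp_mul_I_zpow (c : ℂ) (n : ℤ) (θ : ℝ) :
    (c * exp (θ * I) ^ n).re = c.re * Real.cos (n * θ) - c.im * Real.sin (n * θ) := by
  rw [← exp_int_mul, ← mul_assoc, ← ofReal_intCast, ← ofReal_mul, exp_mul_I, ← ofReal_cos,
    ← ofReal_sin]
  simp only [mul_re, add_re, add_im, ofReal_re, ofReal_im, mul_im, I_re, I_im]
  ring

theorem integral_re_mul_exp_mul_I_zpow_sq (c : ℂ) (hn : n ≠ 0) :
    ∫ θ in (-π)..π, (c * Complex.exp (θ * Complex.I) ^ n).re ^ 2 = π * ‖c‖ ^ 2 := by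
  have hexpand : ∀ θ : ℝ, (c * Complex.exp (θ * Complex.I) ^ n).re ^ 2 =
      c.re ^ 2 * cos (n * θ) ^ 2 + c.im ^ 2 * sin (n * θ) ^ 2
        - 2 * c.re * c.im * (sin (n * θ) * cos (n * θ)) := by
    intro θ
    rw [Complex.re_mul_exp_mul_I_zpow]
    ring
  have hint : ∀ g : ℝ → ℝ, Continuous g → IntervalIntegrable g volume (-π) π :=
    fun g hg => hg.intervalIntegrable _ _
  simp only [hexpand]
  rw [intervalIntegral.integral_sub, intervalIntegral.integral_add,
    intervalIntegral.integral_const_mul, intervalIntegral.integral_const_mul,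
    intervalIntegral.integral_const_mul, integral_cos_int_mul_sq hn, integral_sin_int_mul_sq hn,
    integral_sin_int_mul_mul_cos_int_mul hn, ← Complex.normSq_eq_norm_sq, Complex.normSq_apply]
  · ring
  all_goals exact hint _ (by fun_prop)

end FourierMode

section RadialProfile

theorem integral_rpow_eq_mul_one_sub_div_rpow {a b q : ℝ} (ha : 0 ≤ a) (hb : 0 < b)
    (hq : -1 < q) :
    ∫ r in a..b, r ^ q = b ^ (q + 1) * (1 - (a / b) ^ (q + 1)) / (q + 1) := by
  rw [integral_rpow (Or.inl hq), div_rpow ha hb.le, mul_sub, mul_one,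
    mul_div_cancel₀ _ (rpow_pos_of_pos hb _).ne']

theorem mul_norm_mul_rpow_add_mul_rpow_sq (a₁ a₂ : ℂ) (α₁ α₂ : ℝ) {r : ℝ} (hr : 0 < r) :
    r * ‖a₁ * (r ^ α₁ : ℝ) + a₂ * (r ^ α₂ : ℝ)‖ ^ 2 =
      ‖a₁‖ ^ 2 * r ^ (2 * α₁ + 1) + ‖a₂‖ ^ 2 * r ^ (2 * α₂ + 1)
        + 2 * (a₁ * starRingEnd ℂ a₂).re * r ^ (α₁ + α₂ + 1) := by
  have hcross : (a₁ * (r ^ α₁ : ℝ) * starRingEnd ℂ (a₂ * (r ^ α₂ : ℝ))).re =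
      (a₁ * starRingEnd ℂ a₂).re * (r ^ α₁ * r ^ α₂) := by
    rw [map_mul, Complex.conj_ofReal, mul_mul_mul_comm, ← Complex.ofReal_mul, Complex.re_mul_ofReal]
  have hpow : ∀ s t : ℝ, r ^ (s + t + 1) = r ^ s * r ^ t * r := fun s t => by
    rw [rpow_add hr, rpow_add hr, rpow_one]
  rw [two_mul, two_mul, hpow, hpow, hpow, ← Complex.normSq_eq_norm_sq, Complex.normSq_add,
    Complex.normSq_mul, Complex.normSq_mul, Complex.normSq_ofReal, Complex.normSq_ofReal, hcross,
    Complex.normSq_eq_norm_sq, Complex.normSq_eq_norm_sq]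
  ring

theorem integral_mul_norm_mul_rpow_add_mul_rpow_sq (a₁ a₂ : ℂ) {α₁ α₂ a b : ℝ}
    (hα₁ : -1 < α₁) (hα₂ : -1 < α₂) (ha : 0 < a) (hb : 0 < b) :
    ∫ r in a..b, r * ‖a₁ * (r ^ α₁ : ℝ) + a₂ * (r ^ α₂ : ℝ)‖ ^ 2 =
      ‖a₁‖ ^ 2 / (2 * (α₁ + 1)) * b ^ (2 * (α₁ + 1)) * (1 - (a / b) ^ (2 * (α₁ + 1)))
        + ‖a₂‖ ^ 2 / (2 * (α₂ + 1)) * b ^ (2 * (α₂ + 1)) * (1 - (a / b) ^ (2 * (α₂ + 1)))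
        + 2 * (a₁ * starRingEnd ℂ a₂).re / (α₁ + α₂ + 2) * b ^ (α₁ + α₂ + 2)
          * (1 - (a / b) ^ (α₁ + α₂ + 2)) := by
  have hint : ∀ (C q : ℝ), -1 < q → IntervalIntegrable (fun r : ℝ => C * r ^ q) volume a b :=
    fun C q hq => (intervalIntegral.intervalIntegrable_rpow' hq).const_mul C
  have i₁ := hint (‖a₁‖ ^ 2) (2 * α₁ + 1) (by linarith)
  have i₂ := hint (‖a₂‖ ^ 2) (2 * α₂ + 1) (by linarith)
  have i₃ := hint (2 * (a₁ * starRingEnd ℂ a₂).re) (α₁ + α₂ + 1) (by linarith)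
  rw [intervalIntegral.integral_congr fun r hr =>
      mul_norm_mul_rpow_add_mul_rpow_sq a₁ a₂ α₁ α₂ (lt_min ha hb |>.trans_le hr.1),
    intervalIntegral.integral_add (i₁.add i₂) i₃, intervalIntegral.integral_add i₁ i₂,
    intervalIntegral.integral_const_mul, intervalIntegral.integral_const_mul,
    intervalIntegral.integral_const_mul,
    integral_rpow_eq_mul_one_sub_div_rpow ha.le hb (by linarith),
    integral_rpow_eq_mul_one_sub_div_rpow ha.le hb (by linarith),
    integral_rpow_eq_mul_one_sub_div_rpow ha.le hb (by linarith),
    show 2 * α₁ + 1 + 1 = 2 * (α₁ + 1) by ring, show 2 * α₂ + 1 + 1 = 2 * (α₂ + 1) by ring,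
    show α₁ + α₂ + 1 + 1 = α₁ + α₂ + 2 by ring]
  ring

end RadialProfile

/-- Exact evaluation of `∫_Ω (Re((𝔞₁|z|^{α₁} + 𝔞₂|z|^{α₂})(z/|z|)ⁿ))²`
over the annulus, for a nonzero Fourier mode `n`. -/
theorem statement19 (α₁ α₂ : ℝ) (hα₁ : -1 < α₁) (hα₂ : -1 < α₂) (n : ℤ) (hn : n ≠ 0)
    (a₁ a₂ : ℂ) (a b : ℝ) (ha : 0 < a) (hab : a < b) :
    (∫ z in ann a b,
        ((a₁ * (‖z‖ ^ α₁ : ℝ) + a₂ * (‖z‖ ^ α₂ : ℝ)) *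
            (z / (‖z‖ : ℝ)) ^ n).re ^ 2) =
      Real.pi *
        (‖a₁‖ ^ 2 / (2 * (α₁ + 1)) * b ^ (2 * (α₁ + 1)) *
            (1 - (a / b) ^ (2 * (α₁ + 1))) +
          ‖a₂‖ ^ 2 / (2 * (α₂ + 1)) * b ^ (2 * (α₂ + 1)) *
            (1 - (a / b) ^ (2 * (α₂ + 1))) +
          2 * (a₁ * (starRingEnd ℂ) a₂).re / (α₁ + α₂ + 2) * b ^ (α₁ + α₂ + 2) *
            (1 - (a / b) ^ (α₁ + α₂ + 2))) := by
  set c : ℝ → ℂ := fun r => a₁ * (r ^ α₁ : ℝ) + a₂ * (r ^ α₂ : ℝ)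
  have hcont : ContinuousOn (fun z : ℂ => (c ‖z‖ * (z / (‖z‖ : ℝ)) ^ n).re ^ 2)
      {z | a ≤ ‖z‖ ∧ ‖z‖ ≤ b} := by
    intro z hz
    have hz : z ≠ 0 := norm_pos_iff.mp (ha.trans_le hz.1)
    refine ContinuousAt.continuousWithinAt ?_
    fun_prop (disch := simp [hz])
  have hangular : ∀ r ∈ uIcc a b, r • ∫ θ in (-π)..π,
      (c ‖Complex.polarCoord.symm (r, θ)‖ *
        (Complex.polarCoord.symm (r, θ) / (‖Complex.polarCoord.symm (r, θ)‖ : ℝ)) ^ n).re ^ 2 =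
      π * (r * ‖c r‖ ^ 2) := by
    intro r hr
    have hr : 0 < r := (lt_min ha (ha.trans hab)).trans_le hr.1
    simp only [Complex.norm_polarCoord_symm, abs_of_pos hr,
      Complex.polarCoord_symm_div_fst hr.ne', integral_re_mul_exp_mul_I_zpow_sq _ hn, smul_eq_mul]
    ring
  rw [setIntegral_ann_eq_integral_polar ha.le hab.le hcont,
    intervalIntegral.integral_congr hangular, intervalIntegral.integral_const_mul,
    integral_mul_norm_mul_rpow_add_mul_rpow_sq a₁ a₂ hα₁ hα₂ ha (ha.trans hab)]
end
end
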